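/- arXiv:1207.5748 — 4 statements merged into one kernel-verified Lean document; each statement's English description precedes it below -/
import Mathlib

section
/- Let p, q be positive integers and λ = (λ_1 ≥ λ_2 ≥ … ≥ λ_p ≥ 0) a partition of 2pq all of whose parts are even. Let N be at least the number of nonzero parts of λ and let H ⊂ ℂ[x_1,…,x_N] be the space of homogeneous polynomials of degree 2q. Then there exists a nonzero vector v in the p-fold tensor power H^{⊗p} such that: (i) v is invariant under the action of the symmetric group S_p permuting the tensor factors; (ii) v is fixed by the map of H^{⊗p} induced on each factor by every algebra substitution of the form x_j ↦ x_j + c·x_i with i < j and c ∈ ℂ (and more generally by substitution along any upper triangular matrix with unit diagonal); (iii) for every tuple t = (t_1,…,t_N) of nonzero complex numbers, the map induced on each factor by the substitution x_i ↦ t_i·x_i sends v to (∏_{i=1}^N t_i^{λ_i})·v. (Equivalently, the Schur module S_λ W occurs with positive multiplicity in the plethysm S^p(S^{2q}W) — Weintraub's conjecture.) -/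
open scoped TensorProduct

set_option synthInstance.maxHeartbeats 1000000
set_option maxHeartbeats 1000000

noncomputable section

/-!
Write `λ = 2μ`. Identify `ℂ[x]^{⊗p}` with the polynomial ring in variables `x_{j,i}`, the
variable `x_i` of the `j`-th tensor factor. Fill the cells of the Young diagram of `μ`, column by
column, with the tensor slots `0, 1, …, p - 1, 0, 1, …` cyclically. Columns have length at most
`p`, so each column receives distinct slots, and `μ` has `pq` cells, so each slot is used `q`
times. To a column of length `h` with slots `c_1, …, c_h` attach the determinant
`det (x_{c_l, k})_{k, l ≤ h}`: it is fixed by upper unitriangular substitutions, has torus weight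
`x_1 ⋯ x_h`, and has degree one in each of its slots. The product of the squares of these
determinants has weight `2μ = λ` and degree `2q` in every slot; summing it over the permutations
of the slots makes it `S_p`-invariant. The sum is nonzero because at `x_{j,i} = j^i` every
determinant becomes a nonzero Vandermonde integer, so the sum evaluates to a sum of positive
squares.
-/

namespace MvPolynomial

open PiTensorProduct

section TensorPower

variable {R : Type*} [CommSemiring R] {ι σ : Type*}

lemma weight_single_fst_apply (m : ι × σ →₀ ℕ) (j : ι) :
    Finsupp.weight (fun ji : ι × σ => Finsupp.single ji.1 1) m j = (m.curry j).degree := by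
  classical
  induction m using Finsupp.induction_linear with
  | zero => simp [← Finsupp.coe_curryAddEquiv]
  | add m m' hm hm' =>
    rw [map_add, Finsupp.add_apply, hm, hm', ← map_add, ← Finsupp.add_apply,
      ← Finsupp.coe_curryAddEquiv, ← map_add]
  | single a n =>
    simp [Finsupp.weight_single, Finsupp.single_apply, apply_ite Finsupp.degree]

variable (ι) in
def slotwise (f : MvPolynomial σ R →ₐ[R] MvPolynomial σ R) :
    MvPolynomial (ι × σ) R →ₐ[R] MvPolynomial (ι × σ) R :=
  aeval fun ji => rename (Prod.mk ji.1) (f (X ji.2))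

lemma slotwise_comp_rename (f : MvPolynomial σ R →ₐ[R] MvPolynomial σ R) (j : ι) :
    (slotwise ι f).comp (rename (Prod.mk j)) = (rename (Prod.mk j)).comp f := by
  ext i
  simp [slotwise]

section Fintype

variable [Fintype ι]

variable (R ι σ) in
def ofTensorPower : (⨂[R] _ : ι, MvPolynomial σ R) →ₐ[R] MvPolynomial (ι × σ) R :=
  liftAlgHom ((MultilinearMap.mkPiAlgebra R ι _).compLinearMap
      fun j => (rename (Prod.mk j) : MvPolynomial σ R →ₐ[R] _).toLinearMap)
    (by simp) (by simp [Finset.prod_mul_distrib])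

lemma ofTensorPower_tprod (g : ι → MvPolynomial σ R) :
    ofTensorPower R ι σ (tprod R g) = ∏ j, rename (Prod.mk j) (g j) := by
  show lift _ (tprod R g) = _
  simp

lemma monomial_eq_smul_prod_rename_curry (m : ι × σ →₀ ℕ) (c : R) :
    monomial m c = c • ∏ j, rename (Prod.mk j) (monomial (m.curry j) 1) := by
  classical
  simp only [rename_monomial, ← monomial_sum_one, smul_monomial, smul_eq_mul, mul_one]
  refine congrArg (monomial · c) (Finsupp.ext fun ⟨a, b⟩ => ?_)
  rw [Finsupp.finsetSum_apply, Finset.sum_eq_single a]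
  · simp [Finsupp.mapDomain_apply (Prod.mk_right_injective a)]
  · intro j _ hj
    rw [Finsupp.mapDomain_of_notMem_range]
    simpa using hj
  · simp

end Fintype

variable [DecidableEq ι]

variable (R ι σ) in
def toTensorPower : MvPolynomial (ι × σ) R →ₐ[R] ⨂[R] _ : ι, MvPolynomial σ R :=
  aeval fun ji => singleAlgHom ji.1 (X ji.2)

lemma toTensorPower_comp_rename (j : ι) :
    (toTensorPower R ι σ).comp (rename (Prod.mk j)) =
      singleAlgHom (R := R) (A := fun _ : ι => MvPolynomial σ R) j := by
  ext i
  simp [toTensorPower]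

variable [Fintype ι]

lemma prod_singleAlgHom {A : Type*} [CommSemiring A] [Algebra R A] (g : ι → A) :
    ∏ j, singleAlgHom (R := R) (A := fun _ : ι => A) j (g j) = tprod R g := by
  simp only [singleAlgHom_apply, ← tprod_prod, MonoidHom.mulSingle_apply,
    Finset.univ_prod_mulSingle]

lemma ofTensorPower_comp_toTensorPower :
    (ofTensorPower R ι σ).comp (toTensorPower R ι σ) = AlgHom.id R _ := by
  ext ⟨j, i⟩
  simp only [AlgHom.comp_apply, toTensorPower, aeval_X, singleAlgHom_apply,
    ofTensorPower_tprod, AlgHom.id_apply, MonoidHom.mulSingle_apply]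
  rw [Fintype.prod_eq_single j fun k hk => by simp [Pi.mulSingle_eq_of_ne hk]]
  simp

lemma toTensorPower_injective : Function.Injective (toTensorPower R ι σ) :=
  Function.LeftInverse.injective (g := ofTensorPower R ι σ)
    (AlgHom.congr_fun ofTensorPower_comp_toTensorPower)

lemma toTensorPower_prod_rename (g : ι → MvPolynomial σ R) :
    toTensorPower R ι σ (∏ j, rename (Prod.mk j) (g j)) = tprod R g := by
  simp only [map_prod, ← AlgHom.comp_apply, toTensorPower_comp_rename, prod_singleAlgHom]

lemma toTensorPower_monomial (m : ι × σ →₀ ℕ) (c : R) :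
    toTensorPower R ι σ (monomial m c) = c • tprod R fun j => monomial (m.curry j) 1 := by
  rw [monomial_eq_smul_prod_rename_curry, map_smul, toTensorPower_prod_rename]

lemma reindex_toTensorPower (τ : ι ≃ ι) (P : MvPolynomial (ι × σ) R) :
    reindex R (fun _ : ι => MvPolynomial σ R) τ (toTensorPower R ι σ P) =
      toTensorPower R ι σ (rename (Prod.map τ id) P) := by
  induction P using MvPolynomial.induction_on' with
  | monomial m c =>
    set g : ι → MvPolynomial σ R := fun j => monomial (m.curry j) 1
    have hrename : rename (Prod.map τ id) (∏ j, rename (Prod.mk j) (g j)) =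
        ∏ j, rename (Prod.mk j) (g (τ.symm j)) := by
      rw [map_prod]
      refine Fintype.prod_equiv τ _ _ fun j => ?_
      simp only [rename_rename, Equiv.symm_apply_apply]
      rfl
    simp only [monomial_eq_smul_prod_rename_curry, map_smul, hrename, toTensorPower_prod_rename,
      reindex_tprod, g]
  | add P Q hP hQ => simp only [map_add, hP, hQ]

lemma map_toTensorPower (f : MvPolynomial σ R →ₐ[R] MvPolynomial σ R)
    (P : MvPolynomial (ι × σ) R) :
    PiTensorProduct.map (fun _ => f.toLinearMap) (toTensorPower R ι σ P) =
      toTensorPower R ι σ (slotwise ι f P) := by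
  induction P using MvPolynomial.induction_on' with
  | monomial m c =>
    rw [monomial_eq_smul_prod_rename_curry, map_smul, map_smul, map_smul, map_smul,
      toTensorPower_prod_rename, PiTensorProduct.map_tprod, map_prod]
    simp only [← AlgHom.comp_apply, slotwise_comp_rename]
    simp only [AlgHom.comp_apply, toTensorPower_prod_rename, AlgHom.toLinearMap_apply]
  | add P Q hP hQ => simp only [map_add, hP, hQ]

lemma toTensorPower_mem_range_map_subtype {S : Submodule R (MvPolynomial σ R)}
    {P : MvPolynomial (ι × σ) R}
    (hP : ∀ m ∈ P.support, ∀ j, monomial (m.curry j) 1 ∈ S) :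
    toTensorPower R ι σ P ∈ LinearMap.range (PiTensorProduct.map fun _ : ι => S.subtype) := by
  rw [P.as_sum, map_sum]
  refine Submodule.sum_mem _ fun m hm => ?_
  rw [toTensorPower_monomial]
  exact Submodule.smul_mem _ _
    ⟨tprod R fun j => ⟨_, hP m hm j⟩, PiTensorProduct.map_tprod _ _⟩

lemma toTensorPower_mem_range_map_homogeneousSubmodule {n : ℕ} {P : MvPolynomial (ι × σ) R}
    (hP : IsWeightedHomogeneous (fun ji : ι × σ => Finsupp.single ji.1 1) P
      (∑ j, Finsupp.single j n)) :
    toTensorPower R ι σ P ∈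
      LinearMap.range
        (PiTensorProduct.map fun _ : ι => (homogeneousSubmodule σ R n).subtype) := by
  refine toTensorPower_mem_range_map_subtype fun m hm j => ?_
  rw [mem_homogeneousSubmodule]
  refine isHomogeneous_monomial _ ?_
  rw [← weight_single_fst_apply, hP (mem_support_iff.1 hm)]
  simp [Finsupp.finsetSum_apply, Finsupp.single_apply]

end TensorPower

section VarMinor

variable {R : Type*} [CommRing R] {ι : Type*} {N h : ℕ} (c : Fin h → ι) (hh : h ≤ N)

variable (R) in
def varMinor : Matrix (Fin h) (Fin h) (MvPolynomial (ι × Fin N) R) :=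
  Matrix.of fun k k' => X (c k', Fin.castLE hh k)

lemma rename_det_varMinor (τ : ι → ι) :
    rename (Prod.map τ id) (varMinor R c hh).det = (varMinor R (τ ∘ c) hh).det := by
  rw [AlgHom.map_det]
  congr 1
  ext k k'
  simp [varMinor]

lemma slotwise_det_varMinor_of_unitriangular (g : Matrix (Fin N) (Fin N) R)
    (hg0 : ∀ i j : Fin N, j < i → g i j = 0) (hg1 : ∀ i, g i i = 1) :
    slotwise ι (aeval fun j => ∑ i, g i j • X i) (varMinor R c hh).det =
      (varMinor R c hh).det := by
  set L : Matrix (Fin h) (Fin h) (MvPolynomial (ι × Fin N) R) :=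
    Matrix.of fun k l => C (g (Fin.castLE hh l) (Fin.castLE hh k))
  have hL : L.det = 1 := by
    rw [Matrix.det_of_isLowerTriangular _ fun k l hkl => by
      simp [L, hg0 (Fin.castLE hh l) (Fin.castLE hh k) hkl]]
    simp [L, hg1]
  have hmap : (varMinor R c hh).map (slotwise ι (aeval fun j => ∑ i, g i j • X i)) =
      L * varMinor R c hh := by
    ext k k'
    -- only the rows `i < h` contribute, since `g i k = 0` for `i > k`
    have hrows : ∀ i : Fin N, i ∉ Finset.univ.map (Fin.castLEEmb hh) →
        g i (Fin.castLE hh k) • X (c k', i) = (0 : MvPolynomial (ι × Fin N) R) := by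
      intro i hi
      have hik : Fin.castLE hh k < i := by
        simp only [Finset.mem_map, Finset.mem_univ, true_and, Fin.castLEEmb_apply, not_exists]
          at hi
        by_contra! hik
        exact hi ⟨i, lt_of_le_of_lt hik k.isLt⟩ rfl
      rw [hg0 _ _ hik, zero_smul]
    simp only [Matrix.map_apply, varMinor, Matrix.of_apply, slotwise, aeval_X, map_sum,
      map_smul, rename_X, Matrix.mul_apply, L]
    rw [← Finset.sum_subset (Finset.subset_univ _) fun i _ => hrows i, Finset.sum_map]
    simp [smul_eq_C_mul]
  rw [AlgHom.map_det, AlgHom.mapMatrix_apply, hmap, Matrix.det_mul, hL, one_mul]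

lemma slotwise_det_varMinor_diagonal (t : Fin N → R) :
    slotwise ι (aeval fun j => t j • X j) (varMinor R c hh).det =
      (∏ k, t (Fin.castLE hh k)) • (varMinor R c hh).det := by
  have hmap : (varMinor R c hh).map (slotwise ι (aeval fun j => t j • X j)) =
      Matrix.diagonal (fun k => C (t (Fin.castLE hh k))) * varMinor R c hh := by
    ext k k'
    simp [varMinor, slotwise, smul_eq_C_mul]
  rw [AlgHom.map_det, AlgHom.mapMatrix_apply, hmap, Matrix.det_mul, Matrix.det_diagonal,
    ← map_prod, ← smul_eq_C_mul]

lemma isWeightedHomogeneous_det_varMinor :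
    IsWeightedHomogeneous (fun ji : ι × Fin N => Finsupp.single ji.1 1) (varMinor R c hh).det
      (∑ k, Finsupp.single (c k) 1) := by
  rw [Matrix.det_apply]
  refine IsWeightedHomogeneous.sum _ _ _ fun π _ => ?_
  rw [Units.smul_def, ← Int.cast_smul_eq_zsmul R, smul_eq_C_mul]
  refine (IsWeightedHomogeneous.prod _ _ _ fun k _ => ?_).C_mul _
  simpa [varMinor] using isWeightedHomogeneous_X R (fun ji : ι × Fin N => Finsupp.single ji.1 1)
    (c k, Fin.castLE hh (π k))

lemma eval_det_varMinor (u : ι → R) :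
    eval (fun ji => u ji.1 ^ (ji.2 : ℕ)) (varMinor R c hh).det =
      ∏ i, ∏ j ∈ Finset.Ioi i, (u (c j) - u (c i)) := by
  rw [RingHom.map_det, RingHom.mapMatrix_apply, ← Matrix.det_vandermonde,
    ← Matrix.det_transpose]
  congr 1
  ext k k'
  simp [varMinor, Matrix.vandermonde]

end VarMinor

end MvPolynomial

namespace Weintraub

open Finset

lemma filter_range_lt_of_le {a b : ℕ} (hab : a ≤ b) : {r ∈ range b | r < a} = range a := by
  ext r
  simp only [mem_filter, mem_range]
  omega

lemma sum_range_mul_ofNat {M : Type*} [AddCommMonoid M] (p q : ℕ) [NeZero p] (f : Fin p → M) :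
    ∑ m ∈ range (p * q), f (Fin.ofNat p m) = q • ∑ a, f a := by
  induction q with
  | zero => simp
  | succ q ih =>
    rw [mul_add_one, sum_range_add, ih, succ_nsmul, ← Fin.sum_univ_eq_sum_range]
    congr 1
    refine sum_congr rfl fun a _ => congrArg f (Fin.ext ?_)
    simp [Nat.mod_eq_of_lt a.isLt]

section Columns

variable (p : ℕ) (μ : ℕ → ℕ)

def colLen (r : ℕ) : ℕ := #{i ∈ range p | r < μ i}

def colStart (r : ℕ) : ℕ := ∑ r' ∈ range r, colLen p μ r'

lemma colLen_le (r : ℕ) : colLen p μ r ≤ p :=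
  (card_filter_le _ _).trans (card_range p).le

lemma colLen_le_of_forall_le_imp_eq_zero {N : ℕ} (hN : ∀ i, N ≤ i → μ i = 0) (r : ℕ) :
    colLen p μ r ≤ N := by
  refine (card_le_card fun i hi => ?_).trans (card_range N).le
  simp only [mem_filter, mem_range] at hi ⊢
  by_contra! hiN
  have := hN i hiN
  omega

lemma sum_range_sum_colStart_add {M : Type*} [AddCommMonoid M] (f : ℕ → M) (K : ℕ) :
    ∑ r ∈ range K, ∑ k : Fin (colLen p μ r), f (colStart p μ r + k) =
      ∑ m ∈ range (colStart p μ K), f m := by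
  induction K with
  | zero => simp [colStart]
  | succ K ih =>
    rw [sum_range_succ, ih, show colStart p μ (K + 1) = colStart p μ K + colLen p μ K from
      sum_range_succ _ _, sum_range_add,
      Fin.sum_univ_eq_sum_range (fun k => f (colStart p μ K + k))]

variable {p μ}

lemma lt_colLen_iff (hμ : Antitone μ) (hμp : ∀ i, p ≤ i → μ i = 0) {k r : ℕ} :
    k < colLen p μ r ↔ r < μ k := by
  constructor
  · intro hk
    by_contra! hr
    have hsub : {i ∈ range p | r < μ i} ⊆ range k := fun i hi => by
      simp only [mem_filter, mem_range] at hi ⊢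
      by_contra! hki
      exact absurd (hμ hki) (by omega)
    exact absurd (card_le_card hsub) (by simp only [card_range]; unfold colLen at hk; omega)
  · intro hr
    have hkp : k < p := by
      by_contra! hkp
      rw [hμp k hkp] at hr
      omega
    have hsub : range (k + 1) ⊆ {i ∈ range p | r < μ i} := fun i hi => by
      simp only [mem_filter, mem_range] at hi ⊢
      exact ⟨by omega, hr.trans_le (hμ (by omega))⟩
    have := card_le_card hsub
    rw [card_range] at this
    exact this

lemma card_filter_lt_colLen (hμ : Antitone μ) (hμp : ∀ i, p ≤ i → μ i = 0) (k : ℕ) :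
    #{r ∈ range (μ 0) | k < colLen p μ r} = μ k := by
  rw [filter_congr fun r _ => lt_colLen_iff hμ hμp, filter_range_lt_of_le (hμ k.zero_le),
    card_range]

lemma colStart_top (hμ : Antitone μ) : colStart p μ (μ 0) = ∑ i ∈ range p, μ i := by
  simp only [colStart, colLen, card_filter]
  rw [sum_comm]
  refine sum_congr rfl fun i _ => ?_
  rw [← card_filter, filter_range_lt_of_le (hμ i.zero_le), card_range]

lemma prod_range_prod_castLE_colLen {M : Type*} [CommMonoid M] (hμ : Antitone μ)
    (hμp : ∀ i, p ≤ i → μ i = 0) {N : ℕ} (hN : ∀ r, colLen p μ r ≤ N)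
    (t : Fin N → M) :
    ∏ r ∈ range (μ 0), ∏ k, t (Fin.castLE (hN r) k) = ∏ i, t i ^ μ (i : ℕ) := by
  have hcast : ∀ r, ∏ k, t (Fin.castLE (hN r) k) =
      ∏ i : Fin N, if (i : ℕ) < colLen p μ r then t i else 1 := by
    intro r
    rw [← prod_filter, ← Fin.coe_castLEEmb, ← prod_map univ (Fin.castLEEmb (hN r)) t]
    congr 1
    ext i
    simp only [mem_map, mem_univ, true_and, Fin.coe_castLEEmb, mem_filter]
    exact ⟨fun ⟨k, hk⟩ => hk ▸ k.isLt, fun hi => ⟨⟨i, hi⟩, rfl⟩⟩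
  simp only [hcast]
  rw [prod_comm]
  refine prod_congr rfl fun i _ => ?_
  rw [← prod_filter, prod_const, card_filter_lt_colLen hμ hμp]

end Columns

section Polynomial

open MvPolynomial

variable {R : Type*} [CommRing R] {p N : ℕ} [NeZero p] {μ : ℕ → ℕ}

def columnSlots (σ : Equiv.Perm (Fin p)) (μ : ℕ → ℕ) (r : ℕ) :
    Fin (colLen p μ r) → Fin p :=
  fun k => σ (Fin.ofNat p (colStart p μ r + k))

lemma columnSlots_injective (σ : Equiv.Perm (Fin p)) (r : ℕ) :
    Function.Injective (columnSlots σ μ r) := by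
  intro a b hab
  have hmod := congrArg Fin.val (σ.injective hab)
  simp only [Fin.val_ofNat] at hmod
  have ha := a.isLt.trans_le (colLen_le p μ r)
  have hb := b.isLt.trans_le (colLen_le p μ r)
  have := Nat.ModEq.add_left_cancel' _ hmod
  rw [Nat.ModEq, Nat.mod_eq_of_lt ha, Nat.mod_eq_of_lt hb] at this
  exact Fin.ext this

variable (R μ) (hN : ∀ r, colLen p μ r ≤ N)

def tableauPoly (σ : Equiv.Perm (Fin p)) : MvPolynomial (Fin p × Fin N) R :=
  ∏ r ∈ range (μ 0), (varMinor R (columnSlots σ μ r) (hN r)).det ^ 2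

def weintraubPoly : MvPolynomial (Fin p × Fin N) R :=
  ∑ σ, tableauPoly R μ hN σ

variable {R μ}

lemma rename_weintraubPoly (τ : Equiv.Perm (Fin p)) :
    rename (Prod.map τ id) (weintraubPoly R μ hN) = weintraubPoly R μ hN := by
  have hσ : ∀ σ,
      rename (Prod.map τ id) (tableauPoly R μ hN σ) = tableauPoly R μ hN (τ * σ) :=
    fun σ => by simp only [tableauPoly, map_prod, map_pow, rename_det_varMinor]; rfl
  simp only [weintraubPoly, map_sum, hσ]
  exact Equiv.sum_comp (Equiv.mulLeft τ) _

lemma slotwise_weintraubPoly_of_unitriangular (g : Matrix (Fin N) (Fin N) R)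
    (hg0 : ∀ i j : Fin N, j < i → g i j = 0) (hg1 : ∀ i, g i i = 1) :
    slotwise (Fin p) (aeval fun j => ∑ i, g i j • X i) (weintraubPoly R μ hN) =
      weintraubPoly R μ hN := by
  simp only [weintraubPoly, tableauPoly, map_sum, map_prod, map_pow,
    slotwise_det_varMinor_of_unitriangular _ _ g hg0 hg1]

lemma slotwise_weintraubPoly_diagonal (hμ : Antitone μ) (hμp : ∀ i, p ≤ i → μ i = 0)
    (t : Fin N → R) :
    slotwise (Fin p) (aeval fun j => t j • X j) (weintraubPoly R μ hN) =
      (∏ i, t i ^ (2 * μ (i : ℕ))) • weintraubPoly R μ hN := by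
  have hscalar : ∏ r ∈ range (μ 0), (∏ k, t (Fin.castLE (hN r) k)) ^ 2 =
      ∏ i, t i ^ (2 * μ (i : ℕ)) := by
    rw [prod_pow, prod_range_prod_castLE_colLen hμ hμp hN, ← prod_pow]
    simp only [← pow_mul, mul_comm]
  simp only [weintraubPoly, tableauPoly, map_sum, map_prod, map_pow, smul_sum,
    slotwise_det_varMinor_diagonal, smul_pow, prod_smul, hscalar]

lemma isWeightedHomogeneous_tableauPoly (σ : Equiv.Perm (Fin p)) :
    IsWeightedHomogeneous (fun ji : Fin p × Fin N => Finsupp.single ji.1 1)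
      (tableauPoly R μ hN σ)
      (2 • ∑ m ∈ range (colStart p μ (μ 0)), Finsupp.single (σ (Fin.ofNat p m)) 1) := by
  rw [← sum_range_sum_colStart_add, smul_sum]
  exact IsWeightedHomogeneous.prod _ _ _ fun r _ => (isWeightedHomogeneous_det_varMinor _ _).pow 2

lemma isWeightedHomogeneous_weintraubPoly (hμ : Antitone μ) {q : ℕ}
    (hsum : ∑ i ∈ range p, μ i = p * q) :
    IsWeightedHomogeneous (fun ji : Fin p × Fin N => Finsupp.single ji.1 1)
      (weintraubPoly R μ hN) (∑ j, Finsupp.single j (2 * q)) := by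
  refine IsWeightedHomogeneous.sum _ _ _ fun σ _ => ?_
  convert isWeightedHomogeneous_tableauPoly hN σ using 1
  rw [colStart_top hμ, hsum, sum_range_mul_ofNat p q fun a => Finsupp.single (σ a) 1,
    Equiv.sum_comp σ fun j => Finsupp.single j 1, smul_smul, smul_sum]
  simp

lemma weintraubPoly_ne_zero [CharZero R] : weintraubPoly R μ hN ≠ 0 := by
  set V : Equiv.Perm (Fin p) → ℕ → ℤ := fun σ r =>
    ∏ i, ∏ j ∈ Ioi i, (((columnSlots σ μ r j : ℕ) : ℤ) - (columnSlots σ μ r i : ℕ))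
  have hV : ∀ σ r, V σ r ≠ 0 := fun σ r =>
    prod_ne_zero_iff.2 fun i _ => prod_ne_zero_iff.2 fun j hj => sub_ne_zero.2 fun h =>
      (mem_Ioi.1 hj).ne' (columnSlots_injective σ r (Fin.ext (by exact_mod_cast h)))
  have heval : eval (fun ji : Fin p × Fin N => ((ji.1 : ℕ) : R) ^ (ji.2 : ℕ))
      (weintraubPoly R μ hN) = ((∑ σ, ∏ r ∈ range (μ 0), V σ r ^ 2 : ℤ) : R) := by
    simp only [weintraubPoly, tableauPoly, map_sum, map_prod, map_pow,
      eval_det_varMinor (u := fun j : Fin p => ((j : ℕ) : R)), V]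
    push_cast
    rfl
  have hpos : 0 < ∑ σ, ∏ r ∈ range (μ 0), V σ r ^ 2 :=
    sum_pos (fun σ _ => prod_pos fun r _ => pow_two_pos_of_ne_zero (hV σ r)) univ_nonempty
  intro h
  rw [h, map_zero] at heval
  exact hpos.ne' (by exact_mod_cast heval.symm)

end Polynomial

end Weintraub


theorem stmt_1_general (p q N : ℕ) (hp : 0 < p)
    (lam : ℕ → ℕ) (hanti : Antitone lam)
    (hparts : ∀ i, p ≤ i → lam i = 0)
    (heven : ∀ i, Even (lam i))
    (hsum : ∑ i ∈ Finset.range p, lam i = 2 * p * q)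
    (hN : ∀ i, N ≤ i → lam i = 0) :
    ∃ v : ⨂[ℂ]^p (MvPolynomial (Fin N) ℂ), v ≠ 0 ∧
      v ∈ LinearMap.range (PiTensorProduct.map fun _ : Fin p =>
        (MvPolynomial.homogeneousSubmodule (Fin N) ℂ (2 * q)).subtype) ∧
      (∀ σ : Equiv.Perm (Fin p),
        PiTensorProduct.reindex ℂ (fun _ : Fin p => MvPolynomial (Fin N) ℂ) σ v = v) ∧
      (∀ g : Matrix (Fin N) (Fin N) ℂ, (∀ i j : Fin N, j < i → g i j = 0) →
        (∀ i, g i i = 1) →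
        PiTensorProduct.map (fun _ : Fin p =>
          (MvPolynomial.aeval fun j : Fin N =>
            ∑ i : Fin N, g i j • MvPolynomial.X i :
              MvPolynomial (Fin N) ℂ →ₐ[ℂ] MvPolynomial (Fin N) ℂ).toLinearMap) v = v) ∧
      (∀ t : Fin N → ℂ, (∀ i, t i ≠ 0) →
        PiTensorProduct.map (fun _ : Fin p =>
          (MvPolynomial.aeval fun j : Fin N => t j • MvPolynomial.X j :
              MvPolynomial (Fin N) ℂ →ₐ[ℂ] MvPolynomial (Fin N) ℂ).toLinearMap) v =
          (∏ i : Fin N, t i ^ lam (i : ℕ)) • v) := by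
  have : NeZero p := ⟨hp.ne'⟩
  set μ : ℕ → ℕ := fun i => lam i / 2
  have hlam : ∀ i, lam i = 2 * μ i := fun i => (Nat.two_mul_div_two_of_even (heven i)).symm
  have hμ : Antitone μ := fun i j hij => Nat.div_le_div_right (hanti hij)
  have hμp : ∀ i, p ≤ i → μ i = 0 := fun i hi => by simp [μ, hparts i hi]
  have hμsum : ∑ i ∈ Finset.range p, μ i = p * q := by
    simp only [hlam, ← Finset.mul_sum] at hsum
    linarith
  have hμN : ∀ r, Weintraub.colLen p μ r ≤ N :=
    Weintraub.colLen_le_of_forall_le_imp_eq_zero p μ fun i hi => by simp [μ, hN i hi]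
  refine ⟨MvPolynomial.toTensorPower ℂ _ _ (Weintraub.weintraubPoly ℂ μ hμN), ?_,
    MvPolynomial.toTensorPower_mem_range_map_homogeneousSubmodule
      (Weintraub.isWeightedHomogeneous_weintraubPoly hμN hμ hμsum),
    fun τ => ?_, fun g hg0 hg1 => ?_, fun t _ => ?_⟩
  · exact (map_ne_zero_iff _ MvPolynomial.toTensorPower_injective).2
      (Weintraub.weintraubPoly_ne_zero hμN)
  · rw [MvPolynomial.reindex_toTensorPower, Weintraub.rename_weintraubPoly]
  · rw [MvPolynomial.map_toTensorPower,
      Weintraub.slotwise_weintraubPoly_of_unitriangular hμN g hg0 hg1]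
  · rw [MvPolynomial.map_toTensorPower, Weintraub.slotwise_weintraubPoly_diagonal hμN hμ hμp,
      map_smul]
    simp only [hlam]

/-- **Weintraub's conjecture** (symmetric-power form).
Let `p, q > 0` and let `λ` (given by the antitone function `lam`, with `lam i = 0` for
`i ≥ p`) be a partition of `2pq` all of whose parts are even, with at most `p` parts, and let
`N` be at least the number of nonzero parts of `λ`.  Realizing the symmetric power
`S^{2q}(ℂ^N)` as the space `H` of homogeneous polynomials of degree `2q` in `ℂ[x_1,…,x_N]`,
there is a nonzero vector `v` in the `p`-fold tensor power `H^{⊗p}` (realized inside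
`ℂ[x]^{⊗p}` as the range of the `p`-th tensor power of the inclusion `H ↪ ℂ[x]`) which is
invariant under permutations of the tensor factors, fixed by the maps induced by all
substitutions along upper triangular unipotent matrices `x_j ↦ x_j + ∑_{i<j} g_{ij} x_i`,
and rescaled by `∏ t_i^{λ_i}` under the substitutions `x_i ↦ t_i x_i`; i.e. an `S_p`-invariant
highest weight vector of weight `λ`.  (Equivalently `S_λ W` occurs in `S^p(S^{2q} W)`.) -/
theorem stmt_1 (p q N : ℕ) (hp : 0 < p) (hq : 0 < q)
    (lam : ℕ → ℕ) (hanti : Antitone lam)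
    (hparts : ∀ i, p ≤ i → lam i = 0)
    (heven : ∀ i, Even (lam i))
    (hsum : ∑ i ∈ Finset.range p, lam i = 2 * p * q)
    (hN : ∀ i, N ≤ i → lam i = 0) :
    ∃ v : ⨂[ℂ]^p (MvPolynomial (Fin N) ℂ), v ≠ 0 ∧
      v ∈ LinearMap.range (PiTensorProduct.map fun _ : Fin p =>
        (MvPolynomial.homogeneousSubmodule (Fin N) ℂ (2 * q)).subtype) ∧
      (∀ σ : Equiv.Perm (Fin p),
        PiTensorProduct.reindex ℂ (fun _ : Fin p => MvPolynomial (Fin N) ℂ) σ v = v) ∧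
      (∀ g : Matrix (Fin N) (Fin N) ℂ, (∀ i j : Fin N, j < i → g i j = 0) →
        (∀ i, g i i = 1) →
        PiTensorProduct.map (fun _ : Fin p =>
          (MvPolynomial.aeval fun j : Fin N =>
            ∑ i : Fin N, g i j • MvPolynomial.X i :
              MvPolynomial (Fin N) ℂ →ₐ[ℂ] MvPolynomial (Fin N) ℂ).toLinearMap) v = v) ∧
      (∀ t : Fin N → ℂ, (∀ i, t i ≠ 0) →
        PiTensorProduct.map (fun _ : Fin p =>
          (MvPolynomial.aeval fun j : Fin N => t j • MvPolynomial.X j :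
              MvPolynomial (Fin N) ℂ →ₐ[ℂ] MvPolynomial (Fin N) ℂ).toLinearMap) v =
          (∏ i : Fin N, t i ^ lam (i : ℕ)) • v) :=
  stmt_1_general p q N hp lam hanti hparts heven hsum hN

end
end

section
/- Let k, d be positive integers, λ a partition of dk with conjugate λ*, and N ≥ λ_1, W = ℂ^N. For every T ∈ 𝒯, the vector w_T ∈ (⋀^k W)^{⊗d} is a highest weight vector of weight λ*: for every N×N upper triangular matrix g with all diagonal entries equal to 1, (⋀^k g)^{⊗d} w_T = w_T, and for every tuple t = (t_1,…,t_N) of nonzero complex numbers, (⋀^k diag(t_1,…,t_N))^{⊗d} w_T = (∏_i t_i^{λ*_i})·w_T. -/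
/-!
View `w_T` as a function of the vectors filling the columns of the diagram (initially
`e_1, …, e_{λ_s}` in column `s`). It is multilinear, since every box feeds exactly one slot of one
wedge factor, and alternating within each column, since a transposition there is absorbed by the
sign of `γ_s`. An upper triangular `g` maps `e_j` into the span of `e_1, …, e_j`, so applying `g`
to column `s` multiplies `w_T` by the determinant of the leading `λ_s × λ_s` block of `g`, the
product of its first `λ_s` diagonal entries. Over all columns this gives `1` for unitriangular `g`
and `∏ᵢ tᵢ^{λ*ᵢ}` for `diag(t)`.
-/

open scoped TensorProduct

set_option synthInstance.maxHeartbeats 1000000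
set_option maxHeartbeats 1000000

noncomputable section

/-- The endomorphism of the `k`-th exterior power `⋀[ℂ]^k W` (a submodule of the exterior
algebra) induced by a linear endomorphism `f` of `W`. -/
def exteriorPowerMap {W : Type*} [AddCommGroup W] [Module ℂ W] (k : ℕ)
    (f : W →ₗ[ℂ] W) : ⋀[ℂ]^k W →ₗ[ℂ] ⋀[ℂ]^k W :=
  LinearMap.restrict (ExteriorAlgebra.map f).toLinearMap
    (fun x hx => by
      have h : Submodule.map (ExteriorAlgebra.map f).toLinearMap (⋀[ℂ]^k W) ≤ ⋀[ℂ]^k W := by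
        rw [ExteriorAlgebra.exteriorPower, Submodule.map_pow, ExteriorAlgebra.ι_range_map_map]
        exact pow_le_pow_left' LinearMap.map_le_range k
      exact h ⟨x, hx, rfl⟩)

/-- `h_s^b`: the number of entries equal to `b` in column `s` of the filling `T` of the
diagram of `λ*` (whose column `s` has `lam s` boxes, rows being 0-indexed by
`0,…,lam s - 1`; columns `s` are 0-indexed as well, while the values of `T` lie in
`{1,…,d}`). -/
def hcount (lam : ℕ → ℕ) (T : ℕ → ℕ → ℕ) (s b : ℕ) : ℕ :=
  ((Finset.range (lam s)).filter fun i => T s i = b).card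

/-- The set `𝒯`: fillings `T` of the diagram of `λ*` (column `s` having `lam s` boxes) with
entries in `{1,…,d}`, vanishing outside the diagram (a normalization), weakly increasing down
each column, strictly increasing along each row, and in which every value `b ∈ {1,…,d}`
occurs exactly `k` times. -/
def IsTab (k d l : ℕ) (lam : ℕ → ℕ) (T : ℕ → ℕ → ℕ) : Prop :=
  (∀ s i, i < lam s → 1 ≤ T s i ∧ T s i ≤ d) ∧
  (∀ s i, lam s ≤ i → T s i = 0) ∧
  (∀ s i i', i ≤ i' → i' < lam s → T s i ≤ T s i') ∧
  (∀ s s' i, s < s' → i < lam s' → T s i < T s' i) ∧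
  (∀ b, 1 ≤ b → b ≤ d → ∑ s ∈ Finset.range l, hcount lam T s b = k)

/-- The (0-indexed) standard basis vector `e_{m+1}` of `ℂ^N`; junk value `0` if `m ≥ N`. -/
def E (N m : ℕ) : Fin N → ℂ := fun i => if (i : ℕ) = m then 1 else 0

/-- `f_s^b = h_s^1 + ⋯ + h_s^b` (so `f_s^0 = 0`). -/
def fcount (lam : ℕ → ℕ) (T : ℕ → ℕ → ℕ) (s b : ℕ) : ℕ :=
  ∑ b' ∈ Finset.Icc 1 b, hcount lam T s b'

/-- `γ_s(j)`, 0-indexed: the collection `γ` of permutations `γ_s ∈ S_{λ_s}` applied at column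
`s` and position `j`; junk value `0` when `s ≥ l` or `j ≥ λ_s`. -/
def gIdx (l : ℕ) (lam : ℕ → ℕ) (γ : ∀ s : Fin l, Equiv.Perm (Fin (lam s)))
    (s j : ℕ) : ℕ :=
  if hs : s < l then
    (if hj : j < lam s then ((γ ⟨s, hs⟩) ⟨j, hj⟩ : ℕ) else 0)
  else 0

/-- The list of the `k` vectors appearing in the `b`-th wedge factor (`b ∈ {1,…,d}`) of the
simple tensor `t_{γ_1,…,γ_l}`: for `s = 0,…,l-1` (in this order) the vectors
`e_{γ_s(f_s^{b-1}+1)},…,e_{γ_s(f_s^b)}` (everything written 0-indexed). -/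
def factorList (N l : ℕ) (lam : ℕ → ℕ) (T : ℕ → ℕ → ℕ)
    (γ : ∀ s : Fin l, Equiv.Perm (Fin (lam s))) (b : ℕ) : List (Fin N → ℂ) :=
  (List.range l).flatMap fun s =>
    (List.range' (fcount lam T s (b - 1)) (hcount lam T s b)).map fun j =>
      E N (gIdx l lam γ s j)

/-- The `b`-th wedge factor of the simple tensor `t_{γ_1,…,γ_l}`, as an element of
`⋀^k(ℂ^N)`. -/
def tFactor (k N l : ℕ) (lam : ℕ → ℕ) (T : ℕ → ℕ → ℕ)
    (γ : ∀ s : Fin l, Equiv.Perm (Fin (lam s))) (b : ℕ) : ⋀[ℂ]^k (Fin N → ℂ) :=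
  ⟨ExteriorAlgebra.ιMulti ℂ k fun i : Fin k => (factorList N l lam T γ b).getD i 0,
   ExteriorAlgebra.ιMulti_range ℂ k (Set.mem_range_self _)⟩

/-- The simple tensor `t_{γ_1,…,γ_l} ∈ (⋀^k ℂ^N)^{⊗d}` associated to the filling `T` and the
permutations `γ_s ∈ S_{λ_s}`. -/
def tTensor (k d N l : ℕ) (lam : ℕ → ℕ) (T : ℕ → ℕ → ℕ)
    (γ : ∀ s : Fin l, Equiv.Perm (Fin (lam s))) :
    ⨂[ℂ]^d (⋀[ℂ]^k (Fin N → ℂ)) :=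
  PiTensorProduct.tprod ℂ fun g : Fin d => tFactor k N l lam T γ ((g : ℕ) + 1)

/-- The vector `w_T = (1/∏_{s,b} h_s^b!) ∑_γ (∏_s sgn γ_s) · t_{γ_1,…,γ_l}`. -/
def wT (k d N l : ℕ) (lam : ℕ → ℕ) (T : ℕ → ℕ → ℕ) :
    ⨂[ℂ]^d (⋀[ℂ]^k (Fin N → ℂ)) :=
  (((∏ s ∈ Finset.range l, ∏ b ∈ Finset.Icc 1 d,
      Nat.factorial (hcount lam T s b) : ℕ) : ℂ))⁻¹ •
    ∑ γ : ∀ s : Fin l, Equiv.Perm (Fin (lam s)),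
      ((∏ s : Fin l, (Equiv.Perm.sign (γ s) : ℤ) : ℤ) : ℂ) • tTensor k d N l lam T γ

open Function

theorem AlternatingMap.map_sum_smul_eq_det_smul {R M N ι : Type*} [CommRing R]
    [AddCommGroup M] [Module R M] [AddCommGroup N] [Module R N] [Fintype ι] [DecidableEq ι]
    (f : M [⋀^ι]→ₗ[R] N) (A : Matrix ι ι R) (v : ι → M) :
    f (fun j => ∑ i, A i j • v i) = A.det • f v := by
  set g := f.compLinearMap (Fintype.linearCombination R v)
  have hg : g = (Pi.basisFun R ι).det.smulRight (f v) := by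
    refine Module.Basis.ext_alternating (Pi.basisFun R ι) fun i hi => ?_
    let σ : Equiv.Perm ι := Equiv.ofBijective i (Finite.injective_iff_bijective.1 hi)
    change g (Pi.basisFun R ι ∘ σ) =
      (Pi.basisFun R ι).det.smulRight (f v) (Pi.basisFun R ι ∘ σ)
    rw [g.map_perm, AlternatingMap.smulRight_apply, AlternatingMap.map_perm,
      Module.Basis.det_self, Units.smul_def, Units.smul_def, zsmul_eq_mul, mul_one,
      Int.cast_smul_eq_zsmul]
    congr 1
    simp [g]
  have h := congr($hg (fun j i => A i j))
  rw [AlternatingMap.smulRight_apply, Pi.basisFun_det_apply] at h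
  convert h using 1
  · simp [g, Fintype.linearCombination_apply]
  · rw [← Matrix.det_transpose]; rfl

theorem Function.update_update_apply_perm {ι β : Type*} [DecidableEq ι] {κ : ι → Type*}
    [∀ s, DecidableEq (κ s)] (v : ∀ s, κ s → β) (γ : ∀ s, Equiv.Perm (κ s)) (s₀ : ι)
    (w : κ s₀ → β) (j : κ s₀) (z : β) :
    (fun x : Σ s, κ s => update v s₀ (update w j z) x.1 (γ x.1 x.2)) =
      update (fun x => update v s₀ w x.1 (γ x.1 x.2)) ⟨s₀, (γ s₀).symm j⟩ z := by
  ext ⟨s, a⟩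
  obtain rfl | hs := eq_or_ne s s₀
  · simp [update_apply, ← Equiv.eq_symm_apply]
  · simp [hs]

theorem Equiv.Perm.prod_sign_update {ι : Type*} [Fintype ι] [DecidableEq ι] {κ : ι → Type*}
    [∀ s, Fintype (κ s)] [∀ s, DecidableEq (κ s)] (γ : ∀ s, Equiv.Perm (κ s)) (s₀ : ι)
    (σ : Equiv.Perm (κ s₀)) :
    ∏ s, (sign (update γ s₀ σ s) : ℤ) = sign σ * ∏ s ∈ {s₀}ᶜ, (sign (γ s) : ℤ) := by
  rw [Fintype.prod_eq_mul_prod_compl s₀, update_self]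
  congr 1
  exact Finset.prod_congr rfl fun s hs => by rw [update_of_ne (by simpa using hs)]

section ColumnAntisymmetrization

variable {R V M ι : Type*} [CommRing R] [AddCommGroup V] [Module R V] [AddCommGroup M]
  [Module R M] [Fintype ι] [DecidableEq ι] {κ : ι → Type*} [∀ s, Fintype (κ s)]
  [∀ s, DecidableEq (κ s)]

def columnAntisymmetrization (Ψ : MultilinearMap R (fun _ : Σ s, κ s => V) M)
    (v : ∀ s, κ s → V) : M :=
  ∑ γ : ∀ s, Equiv.Perm (κ s),
    (∏ s, (Equiv.Perm.sign (γ s) : ℤ)) • Ψ fun x => v x.1 (γ x.1 x.2)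

variable (Ψ : MultilinearMap R (fun _ : Σ s, κ s => V) M)

theorem columnAntisymmetrization_update_eq_zero (v : ∀ s, κ s → V) (s₀ : ι) (w : κ s₀ → V)
    {i j : κ s₀} (hw : w i = w j) (hij : i ≠ j) :
    columnAntisymmetrization Ψ (update v s₀ w) = 0 := by
  let flip (γ : ∀ s, Equiv.Perm (κ s)) : ∀ s, Equiv.Perm (κ s) :=
    update γ s₀ (Equiv.swap i j * γ s₀)
  have hw_swap (a : κ s₀) : w (Equiv.swap i j a) = w a := by
    rcases eq_or_ne a i with rfl | hai
    · simp [hw]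
    rcases eq_or_ne a j with rfl | haj
    · simp [hw]
    · simp [Equiv.swap_apply_of_ne_of_ne hai haj]
  refine Finset.sum_ninvolution flip (fun γ => ?_) (fun γ _ => ?_) (fun _ => Finset.mem_univ _)
    (fun γ => ?_)
  · have hterm : (fun x : Σ s, κ s => update v s₀ w x.1 (flip γ x.1 x.2)) =
        fun x => update v s₀ w x.1 (γ x.1 x.2) := by
      ext ⟨s, a⟩
      obtain rfl | hs := eq_or_ne s s₀
      · simpa [flip] using hw_swap (γ s a)
      · simp [flip, hs]
    have hsign :
        ∏ s, (Equiv.Perm.sign (flip γ s) : ℤ) = -∏ s, (Equiv.Perm.sign (γ s) : ℤ) := by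
      rw [Equiv.Perm.prod_sign_update, Fintype.prod_eq_mul_prod_compl s₀, map_mul,
        Equiv.Perm.sign_swap hij]
      simp
    rw [hterm, hsign, neg_smul, add_neg_cancel]
  · intro h
    have := congr_fun h s₀
    simp only [flip, update_self, mul_eq_right, Equiv.swap_eq_one_iff] at this
    exact hij this
  · ext s : 1
    obtain rfl | hs := eq_or_ne s s₀
    · simp [flip, ← mul_assoc]
    · simp [flip, hs]

def columnAntisymmetrization.alternatingMap (v : ∀ s, κ s → V) (s₀ : ι) :
    V [⋀^κ s₀]→ₗ[R] M :=
  { MultilinearMap.mk' (fun w => columnAntisymmetrization Ψ (update v s₀ w))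
      (fun w j x y => by
        simp only [columnAntisymmetrization, update_update_apply_perm, Ψ.map_update_add,
          smul_add, Finset.sum_add_distrib])
      (fun w j c x => by
        simp only [columnAntisymmetrization, update_update_apply_perm, Ψ.map_update_smul,
          Finset.smul_sum, smul_comm c]) with
    map_eq_zero_of_eq' := fun w _ _ hw hij =>
      columnAntisymmetrization_update_eq_zero Ψ v s₀ w hw hij }

theorem columnAntisymmetrization_update_sum_smul (v : ∀ s, κ s → V) (s₀ : ι)
    (A : Matrix (κ s₀) (κ s₀) R) :
    columnAntisymmetrization Ψ (update v s₀ fun j => ∑ i, A i j • v s₀ i) =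
      A.det • columnAntisymmetrization Ψ v := by
  calc columnAntisymmetrization Ψ (update v s₀ fun j => ∑ i, A i j • v s₀ i)
      = columnAntisymmetrization.alternatingMap Ψ v s₀ (fun j => ∑ i, A i j • v s₀ i) := rfl
    _ = A.det • columnAntisymmetrization Ψ (update v s₀ (v s₀)) :=
      AlternatingMap.map_sum_smul_eq_det_smul _ A (v s₀)
    _ = A.det • columnAntisymmetrization Ψ v := by rw [update_eq_self]

theorem columnAntisymmetrization_sum_smul (v : ∀ s, κ s → V)
    (A : ∀ s, Matrix (κ s) (κ s) R) :
    columnAntisymmetrization Ψ (fun s j => ∑ i, A s i j • v s i) =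
      (∏ s, (A s).det) • columnAntisymmetrization Ψ v := by
  classical
  suffices ∀ S : Finset ι, columnAntisymmetrization Ψ
      (fun s j => if s ∈ S then ∑ i, A s i j • v s i else v s j) =
      (∏ s ∈ S, (A s).det) • columnAntisymmetrization Ψ v by
    simpa using this Finset.univ
  intro S
  induction S using Finset.induction_on with
  | empty => simp
  | insert s₀ S hs₀ ih =>
    set u := fun s j => if s ∈ S then ∑ i, A s i j • v s i else v s j
    have hupd : (fun s j => if s ∈ insert s₀ S then ∑ i, A s i j • v s i else v s j) =
        update u s₀ fun j => ∑ i, A s₀ i j • u s₀ i := by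
      ext s j
      obtain rfl | hs := eq_or_ne s s₀ <;> simp [u, *]
    rw [hupd, columnAntisymmetrization_update_sum_smul, ih, smul_smul, Finset.prod_insert hs₀]

end ColumnAntisymmetrization

section BlockWedge

variable {W β : Type*} [AddCommGroup W] [Module ℂ W] {d k : ℕ}

theorem exteriorPowerMap_ιMulti (f : W →ₗ[ℂ] W) (v : Fin k → W) :
    exteriorPowerMap k f (exteriorPower.ιMulti ℂ k v) = exteriorPower.ιMulti ℂ k (f ∘ v) :=
  Subtype.ext (ExteriorAlgebra.map_apply_ιMulti f v)

def blockWedge (e : (Σ _ : Fin d, Fin k) ≃ β) :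
    MultilinearMap ℂ (fun _ : β => W) (⨂[ℂ]^d (⋀[ℂ]^k W)) :=
  ((PiTensorProduct.tprod ℂ).compMultilinearMap fun _ =>
    (exteriorPower.ιMulti ℂ k).toMultilinearMap).domDomCongr e

theorem blockWedge_apply (e : (Σ _ : Fin d, Fin k) ≃ β) (u : β → W) :
    blockWedge e u =
      PiTensorProduct.tprod ℂ fun b => exteriorPower.ιMulti ℂ k fun i => u (e ⟨b, i⟩) :=
  rfl

theorem map_blockWedge (e : (Σ _ : Fin d, Fin k) ≃ β) (f : W →ₗ[ℂ] W) (u : β → W) :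
    PiTensorProduct.map (fun _ => exteriorPowerMap k f) (blockWedge e u) =
      blockWedge e (f ∘ u) := by
  simp only [blockWedge_apply, PiTensorProduct.map_tprod, exteriorPowerMap_ιMulti]
  rfl

theorem map_columnAntisymmetrization_blockWedge {ι : Type*} [Fintype ι] [DecidableEq ι]
    {κ : ι → Type*} [∀ s, Fintype (κ s)] [∀ s, DecidableEq (κ s)]
    (e : (Σ _ : Fin d, Fin k) ≃ Σ s, κ s) (f : W →ₗ[ℂ] W) (v : ∀ s, κ s → W) :
    PiTensorProduct.map (fun _ => exteriorPowerMap k f)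
        (columnAntisymmetrization (blockWedge e) v) =
      columnAntisymmetrization (blockWedge e) fun s j => f (v s j) := by
  simp only [columnAntisymmetrization, map_sum, map_zsmul, map_blockWedge]
  rfl

end BlockWedge

section Tableau

variable {N l : ℕ} {lam : ℕ → ℕ} {T : ℕ → ℕ → ℕ}

variable (lam T) in
theorem fcount_le_lam (s b : ℕ) : fcount lam T s b ≤ lam s := by
  unfold fcount hcount
  rw [Finset.sum_card_fiberwise_eq_card_filter]
  exact (Finset.card_filter_le _ _).trans (Finset.card_range _).le

variable (lam T) in
theorem fcount_pred_add_hcount (s : ℕ) {b : ℕ} (hb : 1 ≤ b) :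
    fcount lam T s (b - 1) + hcount lam T s b = fcount lam T s b := by
  obtain ⟨b, rfl⟩ := Nat.exists_eq_add_of_le' hb
  simp [fcount, Finset.sum_Icc_succ_top]

variable (lam T) in
theorem fcount_mono (s : ℕ) : Monotone (fcount lam T s) := fun _ _ h =>
  Finset.sum_le_sum_of_subset (Finset.Icc_subset_Icc_right h)

variable (l lam T) in
def blockBoxes (b : ℕ) : List (ℕ × ℕ) :=
  (List.range l).flatMap fun s =>
    (List.range' (fcount lam T s (b - 1)) (hcount lam T s b)).map fun j => (s, j)

theorem mem_blockBoxes {b s j : ℕ} :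
    (s, j) ∈ blockBoxes l lam T b ↔
      s < l ∧ fcount lam T s (b - 1) ≤ j ∧ j < fcount lam T s (b - 1) + hcount lam T s b := by
  simp only [blockBoxes, List.mem_flatMap, List.mem_range, List.mem_map, List.mem_range'_1,
    Prod.mk.injEq, exists_eq_right_right]

theorem nodup_blockBoxes (b : ℕ) : (blockBoxes l lam T b).Nodup := by
  refine List.nodup_flatMap.2
    ⟨fun s _ => (List.nodup_range' ..).map fun _ _ h => by simpa using h, ?_⟩
  refine (List.pairwise_lt_range (n := l)).imp fun hss p hp hp' => ?_
  simp only [List.mem_map] at hp hp'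
  obtain ⟨j, _, rfl⟩ := hp
  obtain ⟨j', _, h⟩ := hp'
  exact hss.ne (Prod.ext_iff.1 h).1.symm

theorem length_blockBoxes (b : ℕ) :
    (blockBoxes l lam T b).length = ∑ s ∈ Finset.range l, hcount lam T s b := by
  simp only [blockBoxes, List.length_flatMap, List.length_map, List.length_range']
  rfl

theorem lt_lam_of_mem_blockBoxes {b s j : ℕ} (hb : 1 ≤ b)
    (h : (s, j) ∈ blockBoxes l lam T b) : j < lam s := by
  have := fcount_pred_add_hcount lam T s hb
  have := fcount_le_lam lam T s b
  have := mem_blockBoxes.1 h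
  omega

theorem eq_of_mem_blockBoxes {b b' : ℕ} (hb : 1 ≤ b) (hb' : 1 ≤ b') {p : ℕ × ℕ}
    (h : p ∈ blockBoxes l lam T b) (h' : p ∈ blockBoxes l lam T b') : b = b' := by
  obtain ⟨s, j⟩ := p
  have := fcount_pred_add_hcount lam T s hb
  have := fcount_pred_add_hcount lam T s hb'
  have := mem_blockBoxes.1 h
  have := mem_blockBoxes.1 h'
  by_contra hne
  rcases Nat.lt_or_gt_of_ne hne with hlt | hlt
  · have := fcount_mono lam T s (show b ≤ b' - 1 by omega)
    omega
  · have := fcount_mono lam T s (show b' ≤ b - 1 by omega)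
    omega

theorem factorList_eq_map (γ : ∀ s : Fin l, Equiv.Perm (Fin (lam s))) (b : ℕ) :
    factorList N l lam T γ b =
      (blockBoxes l lam T b).map fun p => E N (gIdx l lam γ p.1 p.2) := by
  simp [factorList, blockBoxes, List.map_flatMap, Function.comp_def]

theorem gIdx_of_lt (γ : ∀ s : Fin l, Equiv.Perm (Fin (lam s))) {s j : ℕ} (hs : s < l)
    (hj : j < lam s) : gIdx l lam γ s j = γ ⟨s, hs⟩ ⟨j, hj⟩ := by
  simp [gIdx, hs, hj]

variable {d k : ℕ} (hmult : ∀ b, 1 ≤ b → b ≤ d → ∑ s ∈ Finset.range l, hcount lam T s b = k)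
include hmult

theorem length_blockBoxes_eq {b : ℕ} (hb : 1 ≤ b) (hbd : b ≤ d) :
    (blockBoxes l lam T b).length = k := by
  rw [length_blockBoxes, hmult b hb hbd]

theorem lt_length_blockBoxes (x : Σ _ : Fin d, Fin k) :
    (x.2 : ℕ) < (blockBoxes l lam T (x.1 + 1)).length := by
  rw [length_blockBoxes_eq hmult (by omega) x.1.isLt]; exact x.2.isLt

def tableauBox (x : Σ _ : Fin d, Fin k) : Σ s : Fin l, Fin (lam s) :=
  have hp := List.getElem_mem (lt_length_blockBoxes hmult x)
  ⟨⟨_, (mem_blockBoxes.1 hp).1⟩, ⟨_, lt_lam_of_mem_blockBoxes (by omega) hp⟩⟩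

theorem tableauBox_injective : Function.Injective (tableauBox hmult) := by
  rintro ⟨b, i⟩ ⟨b', i'⟩ h
  have hp : (blockBoxes l lam T (b + 1))[(i : ℕ)]'(lt_length_blockBoxes hmult ⟨b, i⟩) =
      (blockBoxes l lam T (b' + 1))[(i' : ℕ)]'(lt_length_blockBoxes hmult ⟨b', i'⟩) :=
    congrArg (fun y : Σ s : Fin l, Fin (lam s) => ((y.1 : ℕ), (y.2 : ℕ))) h
  obtain rfl : b = b' := Fin.ext <| Nat.succ_injective <|
    eq_of_mem_blockBoxes (by omega) (by omega) (List.getElem_mem _)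
      (by rw [hp]; exact List.getElem_mem _)
  obtain rfl : i = i' := Fin.ext <| (nodup_blockBoxes _).getElem_inj_iff.1 hp
  rfl

variable (hsum : ∑ s ∈ Finset.range l, lam s = d * k)

/-- The `d k` slots of the wedge factors exhaust the `d k` boxes of the diagram. -/
def tableauBoxEquiv : (Σ _ : Fin d, Fin k) ≃ Σ s : Fin l, Fin (lam s) :=
  Equiv.ofBijective (tableauBox hmult) <| (Fintype.bijective_iff_injective_and_card _).2
    ⟨tableauBox_injective hmult, by simp [Fintype.card_sigma, Fin.sum_univ_eq_sum_range, hsum]⟩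

theorem tTensor_eq_blockWedge (γ : ∀ s : Fin l, Equiv.Perm (Fin (lam s))) :
    tTensor k d N l lam T γ =
      blockWedge (tableauBoxEquiv hmult hsum) fun x => E N (γ x.1 x.2) := by
  rw [tTensor, blockWedge_apply]
  congr 1
  ext b : 1
  refine Subtype.ext (congrArg (ExteriorAlgebra.ιMulti ℂ k) (funext fun i => ?_))
  have hi := lt_length_blockBoxes hmult ⟨b, i⟩
  rw [factorList_eq_map, List.getD_eq_getElem _ _ (by simpa using hi), List.getElem_map,
    gIdx_of_lt]
  rfl

theorem wT_eq_columnAntisymmetrization :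
    wT k d N l lam T = (((∏ s ∈ Finset.range l, ∏ b ∈ Finset.Icc 1 d,
      Nat.factorial (hcount lam T s b) : ℕ) : ℂ))⁻¹ •
      columnAntisymmetrization (blockWedge (tableauBoxEquiv hmult hsum))
        fun (s : Fin l) (j : Fin (lam s)) => E N j := by
  rw [wT, columnAntisymmetrization]
  congr 1
  refine Finset.sum_congr rfl fun γ _ => ?_
  rw [← tTensor_eq_blockWedge hmult hsum]
  exact Int.cast_smul_eq_zsmul ℂ _ (tTensor k d N l lam T γ)

end Tableau

theorem E_eq_single {N m : ℕ} (hm : m < N) : E N m = Pi.single ⟨m, hm⟩ 1 := by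
  ext i
  simp [E, Pi.single_apply, Fin.ext_iff]

theorem toLin'_E_of_isUpperTriangular {N m : ℕ} {g : Matrix (Fin N) (Fin N) ℂ}
    (hg : g.IsUpperTriangular) (hm : m ≤ N) (j : Fin m) :
    Matrix.toLin' g (E N j) =
      ∑ i : Fin m, g.submatrix (Fin.castLE hm) (Fin.castLE hm) i j • E N i := by
  ext i'
  rw [E_eq_single (j.isLt.trans_le hm), Matrix.toLin'_apply, Matrix.mulVec_single_one]
  simp only [Matrix.col_apply, Matrix.submatrix_apply, Finset.sum_apply, Pi.smul_apply, E,
    smul_eq_mul, mul_ite, mul_one, mul_zero]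
  by_cases hi' : (i' : ℕ) < m
  · rw [Finset.sum_eq_single ⟨i', hi'⟩ (fun c _ hc => if_neg fun h => hc (Fin.ext h.symm))
      (by simp), if_pos rfl]
    rfl
  · rw [Finset.sum_eq_zero fun (c : Fin m) _ => if_neg fun h => hi' (by rw [h]; exact c.isLt)]
    exact hg (show (j : ℕ) < i' by omega)

theorem Fin.prod_univ_castLE {M : Type*} [CommMonoid M] {m N : ℕ} (hm : m ≤ N)
    (f : Fin N → M) :
    ∏ i : Fin m, f (Fin.castLE hm i) = ∏ i : Fin N, if (i : ℕ) < m then f i else 1 := by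
  have himage : Finset.univ.filter (fun i : Fin N => (i : ℕ) < m) =
      Finset.univ.map (Fin.castLEEmb hm) := by
    ext i
    simp only [Finset.mem_map, Finset.mem_univ, true_and, Fin.castLEEmb_apply, Finset.mem_filter]
    exact ⟨fun h => ⟨⟨i, h⟩, rfl⟩, fun ⟨j, hj⟩ => hj ▸ j.isLt⟩
  rw [Finset.prod_ite, Finset.prod_const_one, mul_one, himage, Finset.prod_map]
  rfl

theorem prod_prod_castLE_eq_prod_pow {M : Type*} [CommMonoid M] {N l : ℕ} {lam : ℕ → ℕ}
    (hlam : ∀ s, lam s ≤ N) (t : Fin N → M) :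
    ∏ s : Fin l, ∏ i : Fin (lam s), t (Fin.castLE (hlam s) i) =
      ∏ i : Fin N, t i ^ ((Finset.range l).filter fun j => (i : ℕ) + 1 ≤ lam j).card := by
  simp_rw [Fin.prod_univ_castLE]
  rw [Fin.prod_univ_eq_prod_range (fun s => ∏ i : Fin N, if (i : ℕ) < lam s then t i else 1),
    Finset.prod_comm]
  refine Finset.prod_congr rfl fun i _ => ?_
  rw [Finset.prod_ite, Finset.prod_const_one, mul_one, Finset.prod_const]
  rfl

section HighestWeight

variable {k d N l : ℕ} {lam : ℕ → ℕ} {T : ℕ → ℕ → ℕ}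
  (hmult : ∀ b, 1 ≤ b → b ≤ d → ∑ s ∈ Finset.range l, hcount lam T s b = k)
  (hsum : ∑ s ∈ Finset.range l, lam s = d * k)
include hmult hsum

theorem map_wT_of_isUpperTriangular (hlam : ∀ s, lam s ≤ N) {g : Matrix (Fin N) (Fin N) ℂ}
    (hg : g.IsUpperTriangular) :
    PiTensorProduct.map (fun _ : Fin d => exteriorPowerMap k (Matrix.toLin' g))
        (wT k d N l lam T) =
      (∏ s : Fin l, ∏ i : Fin (lam s), g (Fin.castLE (hlam s) i) (Fin.castLE (hlam s) i)) •
        wT k d N l lam T := by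
  rw [wT_eq_columnAntisymmetrization hmult hsum, map_smul,
    map_columnAntisymmetrization_blockWedge]
  simp_rw [toLin'_E_of_isUpperTriangular hg (hlam _)]
  rw [columnAntisymmetrization_sum_smul, smul_comm]
  congr 2
  ext s
  rw [Matrix.det_of_isUpperTriangular]
  · rfl
  · exact fun i j hij => hg hij

end HighestWeight

theorem stmt_3_general (k d N l : ℕ)
    (lam : ℕ → ℕ) (hanti : Antitone lam)
    (hsum : ∑ s ∈ Finset.range l, lam s = d * k)
    (hN : lam 0 ≤ N)
    (T : ℕ → ℕ → ℕ) (hT : IsTab k d l lam T) :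
    (∀ g : Matrix (Fin N) (Fin N) ℂ, (∀ i j : Fin N, j < i → g i j = 0) →
      (∀ i, g i i = 1) →
      PiTensorProduct.map (fun _ : Fin d => exteriorPowerMap k (Matrix.toLin' g))
        (wT k d N l lam T) = wT k d N l lam T) ∧
    (∀ t : Fin N → ℂ, (∀ i, t i ≠ 0) →
      PiTensorProduct.map
        (fun _ : Fin d => exteriorPowerMap k (Matrix.toLin' (Matrix.diagonal t)))
        (wT k d N l lam T) =
        (∏ i : Fin N,
          t i ^ (((Finset.range l).filter fun j => (i : ℕ) + 1 ≤ lam j).card)) •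
          wT k d N l lam T) := by
  have hlam : ∀ s, lam s ≤ N := fun s => (hanti (Nat.zero_le s)).trans hN
  have hmult := hT.2.2.2.2
  refine ⟨fun g hg hdiag => ?_, fun t _ => ?_⟩
  · rw [map_wT_of_isUpperTriangular hmult hsum hlam fun i j hij => hg i j hij]
    simp [hdiag]
  · rw [map_wT_of_isUpperTriangular hmult hsum hlam (Matrix.blockTriangular_diagonal t),
      ← prod_prod_castLE_eq_prod_pow hlam]
    simp

/-- Section 3.2: for every tableau `T ∈ 𝒯` (of shape `λ*`, for `λ` the partition of `d*k`
encoded by the antitone function `lam` with exactly `l` nonzero parts), the vector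
`w_T ∈ (⋀^k ℂ^N)^{⊗d}` is a highest weight vector of weight `λ*`: it is fixed by the maps
induced by all upper triangular matrices with unit diagonal, and it is rescaled by
`∏ᵢ tᵢ^{λ*ᵢ}` by the map induced by `diag(t₁,…,t_N)`, where `λ*ᵢ = #{j : λ_j ≥ i}`. -/
theorem stmt_3 (k d N l : ℕ) (hk : 0 < k) (hd : 0 < d)
    (lam : ℕ → ℕ) (hanti : Antitone lam)
    (hzero : ∀ s, l ≤ s → lam s = 0) (hpos : ∀ s, s < l → 0 < lam s)
    (hsum : ∑ s ∈ Finset.range l, lam s = d * k)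
    (hN : lam 0 ≤ N)
    (T : ℕ → ℕ → ℕ) (hT : IsTab k d l lam T) :
    (∀ g : Matrix (Fin N) (Fin N) ℂ, (∀ i j : Fin N, j < i → g i j = 0) →
      (∀ i, g i i = 1) →
      PiTensorProduct.map (fun _ : Fin d => exteriorPowerMap k (Matrix.toLin' g))
        (wT k d N l lam T) = wT k d N l lam T) ∧
    (∀ t : Fin N → ℂ, (∀ i, t i ≠ 0) →
      PiTensorProduct.map
        (fun _ : Fin d => exteriorPowerMap k (Matrix.toLin' (Matrix.diagonal t)))
        (wT k d N l lam T) =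
        (∏ i : Fin N,
          t i ^ (((Finset.range l).filter fun j => (i : ℕ) + 1 ≤ lam j).card)) •
          wT k d N l lam T) :=
  stmt_3_general k d N l lam hanti hsum hN T hT
end
end

section
/- Let λ = (λ_1 ≥ … ≥ λ_l > 0) be a partition, d ≥ 2 and k ≥ λ_1 integers with kd − |λ| ≥ λ_1 (so that (kd − |λ|, λ_1, …, λ_l) is a partition). Then the number of semistandard Young tableaux of shape (kd − |λ|, λ_1, …, λ_l) in which each value i ∈ {1,…,d} occurs exactly k times equals the number of semistandard Young tableaux of shape λ with entries in {1,…,d−1}. (The bijection removes the first row and subtracts 1 from every remaining entry.) -/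
/-!
The bijection removes the first row and subtracts `1` from the remaining entries. To invert it,
a tableau `T` of shape `λ` with entries `≤ d - 1` must be topped by a weakly increasing row of
length `kd - |λ|` such that every value `1, …, d` occurs `k` times in the whole tableau. Such a
row is determined by the numbers `A v = v k - #{entries of T that are < v}` of its entries `≤ v`:
its `c`-th entry is the least `v` with `c < A v`. Since each value occurs at most once in a
column of `T`, `A` is monotone; since the `i`-th row of `T` has entries `≥ i`, the entries
`< v + 1` of `T` lie in its first `v` rows, so `A (v + 1) ≥ k ≥ λ₁` and the new row sits
strictly above `T + 1`. Conversely, in a tableau with `k` copies of each value `1, …, d` these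
fill all `kd` cells, so all entries are `≤ d`, and its first row is recovered from its lower
rows by the same counts.
-/

/-- A semistandard Young tableau of shape `μ` (the shape is given by the row-length
function `μ : ℕ → ℕ`, rows and columns being 0-indexed): entries are positive integers,
vanish outside the diagram (a normalization), are weakly increasing along each row and
strictly increasing down each column. -/
def IsSSYT (μ : ℕ → ℕ) (T : ℕ → ℕ → ℕ) : Prop :=
  (∀ r c, c < μ r → 1 ≤ T r c) ∧
  (∀ r c, μ r ≤ c → T r c = 0) ∧
  (∀ r c c', c ≤ c' → c' < μ r → T r c ≤ T r c') ∧
  (∀ r r' c, r < r' → c < μ r' → T r c < T r' c)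

/-- The shape `(kd − |λ|, λ_1, …, λ_l)` obtained from the partition `λ` (encoded by the
row-length function `lam`) by adding a first row of length `kd − |λ|`. -/
def shape (k d l : ℕ) (lam : ℕ → ℕ) : ℕ → ℕ :=
  fun r => if r = 0 then k * d - ∑ i ∈ Finset.range l, lam i else lam (r - 1)

open Finset

theorem Nat.sInf_le_iff_of_monotone {A : ℕ → ℕ} (hA : Monotone A) {c v₀ : ℕ}
    (h : c < A v₀) (v : ℕ) : sInf {v | c < A v} ≤ v ↔ c < A v :=
  ⟨fun hv => (Nat.sInf_mem (s := {v | c < A v}) ⟨v₀, h⟩).trans_le (hA hv),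
    fun hv => Nat.sInf_le hv⟩

theorem le_iff_lt_card_filter_le {f : ℕ → ℕ} {m : ℕ} (hf : MonotoneOn f (Set.Iio m))
    {c : ℕ} (hc : c < m) (v : ℕ) : f c ≤ v ↔ c < #{c ∈ range m | f c ≤ v} := by
  constructor
  · intro hcv
    have hsub : range (c + 1) ⊆ {c ∈ range m | f c ≤ v} := by
      intro c' hc'
      simp only [mem_range, mem_filter] at hc' ⊢
      exact ⟨by omega, (hf (Set.mem_Iio.2 (by omega)) hc (by omega)).trans hcv⟩
    simpa using card_le_card hsub
  · intro hlt
    by_contra! hvc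
    have hsub : {c ∈ range m | f c ≤ v} ⊆ range c := by
      intro c' hc'
      simp only [mem_range, mem_filter] at hc' ⊢
      by_contra! hcc'
      exact (hvc.trans_le (hf hc hc'.1 hcc')).not_ge hc'.2
    simpa using hlt.trans_le (card_le_card hsub)

def cellCount (μ : ℕ → ℕ) (n : ℕ) (T : ℕ → ℕ → ℕ) (p : ℕ → Prop) [DecidablePred p] : ℕ :=
  ∑ r ∈ range n, #{c ∈ range (μ r) | p (T r c)}

section cellCount

variable {μ : ℕ → ℕ} {n : ℕ} {T : ℕ → ℕ → ℕ} {p q s : ℕ → Prop}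
  [DecidablePred p] [DecidablePred q] [DecidablePred s]

theorem cellCount_congr {T' : ℕ → ℕ → ℕ}
    (h : ∀ r < n, ∀ c < μ r, p (T r c) ↔ q (T' r c)) :
    cellCount μ n T p = cellCount μ n T' q :=
  sum_congr rfl fun r hr => congrArg card <| filter_congr fun c hc =>
    h r (mem_range.1 hr) c (mem_range.1 hc)

theorem cellCount_eq_add (h : ∀ x, p x ↔ q x ∨ s x) (hqs : ∀ x, q x → ¬ s x) :
    cellCount μ n T p = cellCount μ n T q + cellCount μ n T s := by
  rw [cellCount, cellCount, cellCount, ← sum_add_distrib]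
  refine sum_congr rfl fun r _ => ?_
  rw [← card_union_of_disjoint (disjoint_filter_filter' _ _ ?_), ← filter_or]
  · simp only [h]
  · intro P hPq hPs c hc
    exact hqs _ (hPq c hc) (hPs c hc)

theorem cellCount_eq_sum_iff :
    cellCount μ n T p = ∑ r ∈ range n, μ r ↔ ∀ r < n, ∀ c < μ r, p (T r c) := by
  have hle : ∀ r ∈ range n, #{c ∈ range (μ r) | p (T r c)} ≤ μ r :=
    fun r _ => (card_filter_le _ _).trans_eq (card_range _)
  rw [cellCount, sum_eq_sum_iff_of_le hle]
  simp only [mem_range]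
  refine forall₂_congr fun r _ => ?_
  simpa using card_filter_eq_iff (s := range (μ r)) (p := fun c => p (T r c))

end cellCount

section IsSSYT

variable {μ : ℕ → ℕ} {T : ℕ → ℕ → ℕ}

theorem IsSSYT.add_one_le (hμ : Antitone μ) (hT : IsSSYT μ T) {r c : ℕ} (hc : c < μ r) :
    r + 1 ≤ T r c := by
  induction r with
  | zero => exact hT.1 0 c hc
  | succ r ih =>
    have := hT.2.2.2 r (r + 1) c r.lt_succ_self hc
    have := ih (hc.trans_le (hμ r.le_succ))
    omega

theorem IsSSYT.cellCount_eq_le (hμ : Antitone μ) (hT : IsSSYT μ T) (n v : ℕ) :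
    cellCount μ n T (· = v) ≤ μ 0 := by
  rw [cellCount, ← card_sigma, ← card_range (μ 0)]
  refine card_le_card_of_injOn Sigma.snd (fun x hx => ?_) ?_
  · simp only [coe_sigma, Set.mem_sigma_iff, coe_range, Set.mem_Iio, coe_filter, mem_range,
      Set.mem_ofPred_eq] at hx ⊢
    exact hx.2.1.trans_le (hμ (Nat.zero_le _))
  · rintro ⟨r, c⟩ hx ⟨r', c'⟩ hx' (rfl : c = c')
    simp only [coe_sigma, Set.mem_sigma_iff, coe_range, Set.mem_Iio, coe_filter, mem_range,
      Set.mem_ofPred_eq] at hx hx'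
    obtain hlt | rfl | hgt := lt_trichotomy r r'
    · exact absurd (hT.2.2.2 r r' c hlt hx'.2.1) (by omega)
    · rfl
    · exact absurd (hT.2.2.2 r' r c hgt hx.2.1) (by omega)

theorem IsSSYT.cellCount_lt_le (hμ : Antitone μ) (hT : IsSSYT μ T) (n v : ℕ) :
    cellCount μ n T (· < v + 1) ≤ v * μ 0 := by
  unfold cellCount
  calc ∑ r ∈ range n, #{c ∈ range (μ r) | T r c < v + 1}
    _ ≤ ∑ r ∈ range v, #{c ∈ range (μ r) | T r c < v + 1} := by
        refine sum_le_sum_of_ne_zero fun r _ hr => ?_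
        obtain ⟨c, hc⟩ := card_ne_zero.1 hr
        simp only [mem_filter, mem_range] at hc ⊢
        have := hT.add_one_le hμ hc.1
        omega
    _ ≤ #(range v) • μ 0 := sum_le_card_nsmul _ _ _ fun r _ =>
        (card_filter_le _ _).trans <| (card_range _).trans_le (hμ (Nat.zero_le r))
    _ = v * μ 0 := by simp

end IsSSYT

def HasConstantContent (μ : ℕ → ℕ) (n : ℕ) (T : ℕ → ℕ → ℕ) (d k : ℕ) : Prop :=
  ∀ i, 1 ≤ i → i ≤ d → cellCount μ n T (· = i) = k

theorem HasConstantContent.cellCount_le {μ : ℕ → ℕ} {n d k : ℕ} {T : ℕ → ℕ → ℕ}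
    (h : HasConstantContent μ n T d k) (hT : IsSSYT μ T) {v : ℕ} (hv : v ≤ d) :
    cellCount μ n T (· ≤ v) = v * k := by
  induction v with
  | zero =>
    rw [zero_mul, cellCount]
    refine sum_eq_zero fun r _ => ?_
    rw [card_eq_zero, filter_eq_empty_iff]
    intro c hc
    have := hT.1 r c (mem_range.1 hc)
    omega
  | succ v ih =>
    rw [cellCount_eq_add (q := (· ≤ v)) (s := (· = v + 1)) (fun _ => by omega)
      (fun _ => by omega), ih (by omega), h (v + 1) (by omega) hv, add_mul, one_mul]

theorem HasConstantContent.apply_le {μ : ℕ → ℕ} {n d k : ℕ} {T : ℕ → ℕ → ℕ}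
    (h : HasConstantContent μ n T d k) (hT : IsSSYT μ T)
    (hcells : ∑ r ∈ range n, μ r = d * k) :
    ∀ r < n, ∀ c < μ r, T r c ≤ d :=
  cellCount_eq_sum_iff.1 (by rw [h.cellCount_le hT le_rfl, hcells])

section shape

variable {k d l : ℕ} {lam : ℕ → ℕ}

@[simp]
theorem shape_zero : shape k d l lam 0 = k * d - ∑ i ∈ range l, lam i := rfl

@[simp]
theorem shape_succ (r : ℕ) : shape k d l lam (r + 1) = lam r := rfl

theorem sum_range_succ_shape (h : ∑ i ∈ range l, lam i ≤ k * d) :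
    ∑ r ∈ range (l + 1), shape k d l lam r = k * d := by
  simp [sum_range_succ', Nat.add_sub_cancel' h]

theorem cellCount_shape (T : ℕ → ℕ → ℕ) (p : ℕ → Prop) [DecidablePred p] :
    cellCount (shape k d l lam) (l + 1) T p =
      #{c ∈ range (k * d - ∑ i ∈ range l, lam i) | p (T 0 c)} +
        cellCount lam l (fun r => T (r + 1)) p := by
  simp [cellCount, sum_range_succ', add_comm]

end shape

/-- The number of entries `≤ v` a first row placed above `T + 1` must contain, so that together
with `T + 1` each value `1, …, v` occurs `k` times. -/
def firstRowCount (k l : ℕ) (lam : ℕ → ℕ) (T : ℕ → ℕ → ℕ) (v : ℕ) : ℕ :=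
  v * k - cellCount lam l T (· < v)

noncomputable def firstRow (k l : ℕ) (lam : ℕ → ℕ) (T : ℕ → ℕ → ℕ) (c : ℕ) :
    ℕ :=
  sInf {v | c < firstRowCount k l lam T v}

section firstRow

variable {k d l : ℕ} {lam : ℕ → ℕ} {T : ℕ → ℕ → ℕ}

theorem firstRowCount_add_cellCount (hanti : Antitone lam) (hk : lam 0 ≤ k)
    (hT : IsSSYT lam T) (v : ℕ) :
    firstRowCount k l lam T v + cellCount lam l T (· < v) = v * k := by
  refine Nat.sub_add_cancel ?_
  cases v with
  | zero => simp [cellCount]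
  | succ v =>
    calc cellCount lam l T (· < v + 1) ≤ v * lam 0 := hT.cellCount_lt_le hanti l v
      _ ≤ (v + 1) * k := Nat.mul_le_mul (by omega) hk

theorem monotone_firstRowCount (hanti : Antitone lam) (hk : lam 0 ≤ k) (hT : IsSSYT lam T) :
    Monotone (firstRowCount k l lam T) := by
  refine monotone_nat_of_le_succ fun v => ?_
  have hsucc := firstRowCount_add_cellCount (l := l) hanti hk hT (v + 1)
  have hv := firstRowCount_add_cellCount (l := l) hanti hk hT v
  rw [cellCount_eq_add (q := (· < v)) (s := (· = v)) (fun _ => by omega) (fun _ => by omega)]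
    at hsucc
  have := hT.cellCount_eq_le hanti l v
  rw [add_mul, one_mul] at hsucc
  omega

theorem le_firstRowCount_succ (hanti : Antitone lam) (hk : lam 0 ≤ k) (hT : IsSSYT lam T)
    (v : ℕ) : k ≤ firstRowCount k l lam T (v + 1) := by
  have h := firstRowCount_add_cellCount (l := l) hanti hk hT (v + 1)
  have := hT.cellCount_lt_le hanti l v
  have := Nat.mul_le_mul_left v hk
  rw [add_mul, one_mul] at h
  omega

theorem firstRowCount_eq (hbd : ∀ r c, c < lam r → T r c < d) :
    firstRowCount k l lam T d = k * d - ∑ i ∈ range l, lam i := by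
  rw [firstRowCount, cellCount_eq_sum_iff.2 fun r _ c hc => hbd r c hc, mul_comm]

theorem firstRow_le_iff (hanti : Antitone lam) (hk : lam 0 ≤ k) (hT : IsSSYT lam T)
    (hbd : ∀ r c, c < lam r → T r c < d) {c : ℕ} (hc : c < k * d - ∑ i ∈ range l, lam i)
    (v : ℕ) : firstRow k l lam T c ≤ v ↔ c < firstRowCount k l lam T v :=
  Nat.sInf_le_iff_of_monotone (monotone_firstRowCount hanti hk hT)
    (by rwa [firstRowCount_eq hbd]) v

theorem firstRow_le_apply (hanti : Antitone lam) (hk : lam 0 ≤ k) (hT : IsSSYT lam T)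
    {c : ℕ} (hc : c < lam 0) : firstRow k l lam T c ≤ T 0 c := by
  obtain ⟨v, hv⟩ : ∃ v, T 0 c = v + 1 := ⟨T 0 c - 1, by have := hT.1 0 c hc; omega⟩
  exact Nat.sInf_le <| hv ▸ hc.trans_le (hk.trans (le_firstRowCount_succ hanti hk hT v))

theorem card_filter_firstRow_le (hanti : Antitone lam) (hk : lam 0 ≤ k) (hT : IsSSYT lam T)
    (hbd : ∀ r c, c < lam r → T r c < d) {v : ℕ} (hv : v ≤ d) :
    #{c ∈ range (k * d - ∑ i ∈ range l, lam i) | firstRow k l lam T c ≤ v} =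
      firstRowCount k l lam T v := by
  have hle : firstRowCount k l lam T v ≤ k * d - ∑ i ∈ range l, lam i :=
    firstRowCount_eq (k := k) (l := l) hbd ▸ monotone_firstRowCount hanti hk hT hv
  rw [← card_range (firstRowCount k l lam T v)]
  congr 1
  ext c
  simp only [mem_filter, mem_range]
  exact ⟨fun h => (firstRow_le_iff hanti hk hT hbd h.1 v).1 h.2,
    fun h => ⟨h.trans_le hle, (firstRow_le_iff hanti hk hT hbd (h.trans_le hle) v).2 h⟩⟩

end firstRow

def dropFirstRow (lam : ℕ → ℕ) (T : ℕ → ℕ → ℕ) : ℕ → ℕ → ℕ :=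
  fun r c => if c < lam r then T (r + 1) c - 1 else 0

noncomputable def addFirstRow (k d l : ℕ) (lam : ℕ → ℕ) (T : ℕ → ℕ → ℕ) :
    ℕ → ℕ → ℕ
  | 0, c => if c < k * d - ∑ i ∈ range l, lam i then firstRow k l lam T c else 0
  | r + 1, c => if c < lam r then T r c + 1 else 0

section addFirstRow

variable {k d l : ℕ} {lam : ℕ → ℕ} {T : ℕ → ℕ → ℕ}

theorem isSSYT_addFirstRow (hanti : Antitone lam) (hk : lam 0 ≤ k)
    (hfirst : lam 0 + ∑ i ∈ range l, lam i ≤ k * d) (hT : IsSSYT lam T)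
    (hbd : ∀ r c, c < lam r → T r c < d) :
    IsSSYT (shape k d l lam) (addFirstRow k d l lam T) := by
  have hrow0 := @firstRow_le_iff k d l lam T hanti hk hT hbd
  have hrow0_le := @firstRow_le_apply k l lam T hanti hk hT
  obtain ⟨hpos, hzero, hrow, hcol⟩ := hT
  refine ⟨?_, ?_, ?_, ?_⟩
  · rintro (_ | r) c hc <;> simp only [shape_zero, shape_succ, addFirstRow] at hc ⊢
    · rw [if_pos hc]
      by_contra! h
      simpa [firstRowCount] using (hrow0 hc 0).1 (by omega)
    · simp [hc]
  · rintro (_ | r) c hc <;> simp only [shape_zero, shape_succ, addFirstRow] at hc ⊢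
    · simp [not_lt.2 hc]
    · simp [not_lt.2 hc]
  · rintro (_ | r) c c' hcc' hc' <;> simp only [shape_zero, shape_succ, addFirstRow] at hc' ⊢
    · rw [if_pos hc', if_pos (hcc'.trans_lt hc'), hrow0 (hcc'.trans_lt hc')]
      exact hcc'.trans_lt ((hrow0 hc' _).1 le_rfl)
    · simp [hcc'.trans_lt hc', hc', hrow r c c' hcc' hc']
  · rintro r (_ | r') c hrr' hc'
    · omega
    rw [shape_succ] at hc'
    cases r with
    | zero =>
      have hc0 : c < lam 0 := hc'.trans_le (hanti (Nat.zero_le r'))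
      have hcol' : T 0 c ≤ T r' c := by
        rcases r'.eq_zero_or_pos with rfl | hr'
        · rfl
        · exact (hcol 0 r' c hr' hc').le
      have := hrow0_le hc0
      have hcm : c < k * d - ∑ i ∈ range l, lam i := by omega
      simp only [addFirstRow, if_pos hcm, if_pos hc']
      omega
    | succ r =>
      have hc : c < lam r := hc'.trans_le (hanti (by omega))
      simp only [addFirstRow, if_pos hc, if_pos hc']
      have := hcol r r' c (by omega) hc'
      omega

theorem cellCount_addFirstRow_le (hanti : Antitone lam) (hk : lam 0 ≤ k) (hT : IsSSYT lam T)
    (hbd : ∀ r c, c < lam r → T r c < d) {v : ℕ} (hv : v ≤ d) :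
    cellCount (shape k d l lam) (l + 1) (addFirstRow k d l lam T) (· ≤ v) = v * k := by
  rw [cellCount_shape, ← firstRowCount_add_cellCount (l := l) hanti hk hT v,
    ← card_filter_firstRow_le hanti hk hT hbd hv]
  congr 1
  · exact congrArg card (filter_congr fun c hc => by simp [addFirstRow, mem_range.1 hc])
  · exact cellCount_congr fun r _ c hc => by simp [addFirstRow, hc]

theorem hasConstantContent_addFirstRow (hanti : Antitone lam) (hk : lam 0 ≤ k)
    (hT : IsSSYT lam T) (hbd : ∀ r c, c < lam r → T r c < d) :
    HasConstantContent (shape k d l lam) (l + 1) (addFirstRow k d l lam T) d k := by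
  intro i hi hid
  obtain ⟨v, rfl⟩ : ∃ v, i = v + 1 := ⟨i - 1, by omega⟩
  have h := cellCount_addFirstRow_le (l := l) hanti hk hT hbd hid
  rw [cellCount_eq_add (q := (· ≤ v)) (s := (· = v + 1)) (fun _ => by omega)
    (fun _ => by omega), cellCount_addFirstRow_le hanti hk hT hbd (by omega), add_mul, one_mul] at h
  omega

theorem dropFirstRow_addFirstRow (hT : IsSSYT lam T) :
    dropFirstRow lam (addFirstRow k d l lam T) = T := by
  funext r c
  by_cases hc : c < lam r
  · simp [dropFirstRow, addFirstRow, hc]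
  · simp [dropFirstRow, hc, hT.2.1 r c (by omega)]

end addFirstRow

section dropFirstRow

variable {k d l : ℕ} {lam : ℕ → ℕ} {T : ℕ → ℕ → ℕ}

theorem isSSYT_dropFirstRow (hanti : Antitone lam)
    (hfirst : lam 0 + ∑ i ∈ range l, lam i ≤ k * d) (hT : IsSSYT (shape k d l lam) T) :
    IsSSYT lam (dropFirstRow lam T) := by
  obtain ⟨hpos, hzero, hrow, hcol⟩ := hT
  have htwo : ∀ r c, c < lam r → 2 ≤ T (r + 1) c := fun r c hc => by
    have := hpos 0 c (by rw [shape_zero]; have := hanti (Nat.zero_le r); omega)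
    have := hcol 0 (r + 1) c r.succ_pos (by rwa [shape_succ])
    omega
  refine ⟨fun r c hc => ?_, fun r c hc => ?_, fun r c c' hcc' hc' => ?_,
    fun r r' c hrr' hc' => ?_⟩
  · simp only [dropFirstRow, if_pos hc]
    have := htwo r c hc
    omega
  · simp [dropFirstRow, not_lt.2 hc]
  · have hc : c < lam r := hcc'.trans_lt hc'
    simp only [dropFirstRow, if_pos hc, if_pos hc']
    have := hrow (r + 1) c c' hcc' (by rwa [shape_succ])
    omega
  · have hc : c < lam r := hc'.trans_le (hanti hrr'.le)
    simp only [dropFirstRow, if_pos hc, if_pos hc']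
    have := htwo r c hc
    have := hcol (r + 1) (r' + 1) c (by omega) (by rwa [shape_succ])
    omega

theorem HasConstantContent.apply_le_of_lt_shape (hzero : ∀ i, l ≤ i → lam i = 0)
    (hfirst : lam 0 + ∑ i ∈ range l, lam i ≤ k * d) (hT : IsSSYT (shape k d l lam) T)
    (hcontent : HasConstantContent (shape k d l lam) (l + 1) T d k)
    {r c : ℕ} (hc : c < shape k d l lam r) : T r c ≤ d := by
  refine hcontent.apply_le hT (by rw [sum_range_succ_shape (by omega), mul_comm]) r ?_ c hc
  rcases r with _ | r
  · omega
  · by_contra! hr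
    rw [shape_succ, hzero r (by omega)] at hc
    omega

theorem dropFirstRow_lt (hzero : ∀ i, l ≤ i → lam i = 0)
    (hfirst : lam 0 + ∑ i ∈ range l, lam i ≤ k * d) (hT : IsSSYT (shape k d l lam) T)
    (hcontent : HasConstantContent (shape k d l lam) (l + 1) T d k) :
    ∀ r c, c < lam r → dropFirstRow lam T r c < d := fun r c hc => by
  have hc' : c < shape k d l lam (r + 1) := by rwa [shape_succ]
  have := hcontent.apply_le_of_lt_shape hzero hfirst hT hc'
  have := hT.1 _ c hc'
  simp only [dropFirstRow, if_pos hc]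
  omega

theorem card_filter_le_eq_firstRowCount_dropFirstRow (hanti : Antitone lam) (hk : lam 0 ≤ k)
    (hfirst : lam 0 + ∑ i ∈ range l, lam i ≤ k * d) (hT : IsSSYT (shape k d l lam) T)
    (hcontent : HasConstantContent (shape k d l lam) (l + 1) T d k) {v : ℕ} (hv : v ≤ d) :
    #{c ∈ range (k * d - ∑ i ∈ range l, lam i) | T 0 c ≤ v} =
      firstRowCount k l lam (dropFirstRow lam T) v := by
  have htotal := hcontent.cellCount_le hT hv
  have hlower : cellCount lam l (fun r => T (r + 1)) (· ≤ v) =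
      cellCount lam l (dropFirstRow lam T) (· < v) :=
    cellCount_congr fun r _ c hc => by
      have := hT.1 (r + 1) c (by rwa [shape_succ])
      simp only [dropFirstRow, if_pos hc]
      omega
  rw [cellCount_shape, hlower, ← firstRowCount_add_cellCount (l := l) hanti hk
    (isSSYT_dropFirstRow hanti hfirst hT) v] at htotal
  omega

theorem firstRow_dropFirstRow (hanti : Antitone lam) (hk : lam 0 ≤ k)
    (hzero : ∀ i, l ≤ i → lam i = 0) (hfirst : lam 0 + ∑ i ∈ range l, lam i ≤ k * d)
    (hT : IsSSYT (shape k d l lam) T)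
    (hcontent : HasConstantContent (shape k d l lam) (l + 1) T d k) {c : ℕ}
    (hc : c < k * d - ∑ i ∈ range l, lam i) :
    firstRow k l lam (dropFirstRow lam T) c = T 0 c := by
  have hrow : MonotoneOn (T 0) (Set.Iio (k * d - ∑ i ∈ range l, lam i)) :=
    fun a _ b hb hab => hT.2.2.1 0 a b hab hb
  have hle_iff : ∀ v ≤ d, T 0 c ≤ v ↔ c < firstRowCount k l lam (dropFirstRow lam T) v :=
    fun v hv => by
      rw [le_iff_lt_card_filter_le hrow hc v,
        card_filter_le_eq_firstRowCount_dropFirstRow hanti hk hfirst hT hcontent hv]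
  have hTd : T 0 c ≤ d := hcontent.apply_le_of_lt_shape hzero hfirst hT (by rwa [shape_zero])
  refine IsLeast.csInf_eq ⟨(hle_iff _ hTd).1 le_rfl, fun v hv => ?_⟩
  rcases le_or_gt v d with hvd | hdv
  · exact (hle_iff v hvd).2 hv
  · exact hTd.trans hdv.le

theorem addFirstRow_dropFirstRow (hanti : Antitone lam) (hk : lam 0 ≤ k)
    (hzero : ∀ i, l ≤ i → lam i = 0) (hfirst : lam 0 + ∑ i ∈ range l, lam i ≤ k * d)
    (hT : IsSSYT (shape k d l lam) T)
    (hcontent : HasConstantContent (shape k d l lam) (l + 1) T d k) :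
    addFirstRow k d l lam (dropFirstRow lam T) = T := by
  funext r c
  rcases r with _ | r
  · by_cases hc : c < k * d - ∑ i ∈ range l, lam i
    · simp only [addFirstRow, if_pos hc]
      exact firstRow_dropFirstRow hanti hk hzero hfirst hT hcontent hc
    · simp only [addFirstRow, if_neg hc]
      exact (hT.2.1 0 c (by rw [shape_zero]; omega)).symm
  · by_cases hc : c < lam r
    · have := hT.1 (r + 1) c (by rwa [shape_succ])
      simp only [addFirstRow, dropFirstRow, if_pos hc]
      omega
    · simp only [addFirstRow, if_neg hc]
      exact (hT.2.1 (r + 1) c (by rw [shape_succ]; omega)).symm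

end dropFirstRow

theorem stmt_7_general (k d l : ℕ) (hd : 2 ≤ d)
    (lam : ℕ → ℕ) (hanti : Antitone lam)
    (hzero : ∀ i, l ≤ i → lam i = 0)
    (hk : lam 0 ≤ k)
    (hfirst : lam 0 + ∑ i ∈ Finset.range l, lam i ≤ k * d) :
    Nat.card {T : ℕ → ℕ → ℕ // IsSSYT (shape k d l lam) T ∧
      ∀ i, 1 ≤ i → i ≤ d →
        (∑ r ∈ Finset.range (l + 1),
          ((Finset.range (shape k d l lam r)).filter fun c => T r c = i).card) = k} =
    Nat.card {T : ℕ → ℕ → ℕ // IsSSYT lam T ∧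
      ∀ r c, c < lam r → T r c ≤ d - 1} := by
  have hlt : ∀ T : ℕ → ℕ → ℕ, (∀ r c, c < lam r → T r c ≤ d - 1) →
      ∀ r c, c < lam r → T r c < d :=
    fun T hT r c hc => Nat.lt_of_le_sub_one (by omega) (hT r c hc)
  refine Nat.card_congr
    { toFun := fun T => ⟨dropFirstRow lam T, isSSYT_dropFirstRow hanti hfirst T.2.1,
        fun r c hc => Nat.le_sub_one_of_lt (dropFirstRow_lt hzero hfirst T.2.1 T.2.2 r c hc)⟩
      invFun := fun T => ⟨addFirstRow k d l lam T, isSSYT_addFirstRow hanti hk hfirst T.2.1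
          (hlt T T.2.2), hasConstantContent_addFirstRow hanti hk T.2.1 (hlt T T.2.2)⟩
      left_inv := fun T =>
        Subtype.ext (addFirstRow_dropFirstRow hanti hk hzero hfirst T.2.1 T.2.2)
      right_inv := fun T =>
        Subtype.ext (dropFirstRow_addFirstRow (k := k) (d := d) (l := l) T.2.1) }

/-- Section 2.2: for `d ≥ 2`, `k ≥ λ_1` and `kd − |λ| ≥ λ_1`, the number of semistandard
Young tableaux of shape `(kd − |λ|, λ_1, …, λ_l)` in which each value `i ∈ {1,…,d}` occurs
exactly `k` times equals the number of semistandard Young tableaux of shape `λ` with entries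
in `{1,…,d−1}` (the bijection removes the first row and subtracts `1` from every remaining
entry); here `λ` is the partition encoded by the antitone function `lam`, with exactly `l`
nonzero parts.  The first count is the multiplicity `s_{k,d}(λ)` of `S_{(kd−|λ|,λ)}V` inside
`(S^k V)^{⊗d}`, the second one is `dim S_λ ℂ^{d−1}`. -/
theorem stmt_7 (k d l : ℕ) (hd : 2 ≤ d)
    (lam : ℕ → ℕ) (hanti : Antitone lam)
    (hzero : ∀ i, l ≤ i → lam i = 0) (hpos : ∀ i, i < l → 0 < lam i)
    (hk : lam 0 ≤ k)
    (hfirst : lam 0 + ∑ i ∈ Finset.range l, lam i ≤ k * d) :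
    Nat.card {T : ℕ → ℕ → ℕ // IsSSYT (shape k d l lam) T ∧
      ∀ i, 1 ≤ i → i ≤ d →
        (∑ r ∈ Finset.range (l + 1),
          ((Finset.range (shape k d l lam r)).filter fun c => T r c = i).card) = k} =
    Nat.card {T : ℕ → ℕ → ℕ // IsSSYT lam T ∧
      ∀ r c, c < lam r → T r c ≤ d - 1} :=
  stmt_7_general k d l hd lam hanti hzero hk hfirst
end

section
/- Let n be a positive integer and σ a permutation of {1,…,n} with the property that for every j ∈ {1,…,n}, if σ(j) is odd then j < n and σ(j+1) = σ(j) + 1 (σ is 'paired'). Then every j with σ(j) odd is itself odd, and the sign of σ equals +1. -/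
/-!
Positions whose value is odd in `{1,…,n}` are exactly the successors of positions whose value is
even, since the value `2k - 1` is always followed by `2k`. Hence, by induction along the
positions, values and positions have the same parity; in particular `n` is even and `σ` maps
each block `{2k - 1, 2k}` onto a block `{2l - 1, 2l}` in increasing order. So `σ` is conjugate
to `π × id` on `{1,…,n/2} × {1, 2}` for a permutation `π`, and `sgn σ = (sgn π)² = 1`.
-/

open Equiv

namespace Equiv.Perm

variable {α β γ : Type*} [Fintype α] [DecidableEq α] [Fintype β] [DecidableEq β]
  [Fintype γ] [DecidableEq γ] [Nonempty γ]

theorem sign_eq_one_of_permutes_blocks {e : α × γ ≃ β} {σ : Perm β} {f : α → α}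
    (hγ : Even (Fintype.card γ)) (h : ∀ a c, σ (e (a, c)) = e (f a, c)) : sign σ = 1 := by
  obtain ⟨c⟩ := ‹Nonempty γ›
  have hf : f.Injective := fun a a' haa' => by
    have : σ (e (a, c)) = σ (e (a', c)) := by rw [h, h, haa']
    simpa using this
  let π : Perm α := Equiv.ofBijective f (Finite.injective_iff_bijective.mp hf)
  rw [← sign_eq_sign_of_equiv (prodCongrLeft fun _ : γ => π) σ e fun x => (h x.1 x.2).symm,
    sign_prodCongrLeft, Finset.prod_const, Finset.card_univ]
  obtain ⟨k, hk⟩ := hγ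
  rw [hk, pow_add, Int.units_mul_self]

end Equiv.Perm

/-- `Fin n` stands for `{1,…,n}` via `j ↦ j + 1`, which flips parities: a value `σ j` that is
odd in `{1,…,n}` is even here. -/
def IsPaired {n : ℕ} (σ : Perm (Fin n)) : Prop :=
  ∀ j : Fin n, Even (σ j : ℕ) → ∃ hj : (j : ℕ) + 1 < n, (σ ⟨j + 1, hj⟩ : ℕ) = σ j + 1

namespace IsPaired

variable {n : ℕ} {σ : Perm (Fin n)}

theorem exists_even_pred (hσ : IsPaired σ) {j : Fin n} (hj : ¬Even (σ j : ℕ)) :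
    ∃ i : Fin n, (i : ℕ) + 1 = j ∧ Even (σ i : ℕ) := by
  have hpos : 0 < (σ j : ℕ) := Nat.pos_of_ne_zero fun h => hj (h ▸ Even.zero)
  set i := σ.symm ⟨σ j - 1, by omega⟩
  have hi : (σ i : ℕ) = σ j - 1 := by simp [i]
  have hi_even : Even (σ i : ℕ) := by
    obtain ⟨t, ht⟩ := Nat.not_even_iff_odd.mp hj
    exact ⟨t, by omega⟩
  obtain ⟨hlt, hsucc⟩ := hσ i hi_even
  have : (⟨i + 1, hlt⟩ : Fin n) = j := σ.injective (Fin.ext (by omega))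
  exact ⟨i, congrArg Fin.val this, hi_even⟩

theorem even_apply_succ_iff (hσ : IsPaired σ) {j : ℕ} (hj : j + 1 < n) :
    Even (σ ⟨j + 1, hj⟩ : ℕ) ↔ ¬Even (σ ⟨j, by omega⟩ : ℕ) := by
  constructor
  · intro hsucc hcur
    obtain ⟨_, h⟩ := hσ _ hcur
    rw [h, Nat.even_add_one] at hsucc
    exact hsucc hcur
  · intro hcur
    by_contra hsucc
    obtain ⟨i, hi, hi_even⟩ := hσ.exists_even_pred hsucc
    have : i = ⟨j, by omega⟩ := Fin.ext (by simpa using hi)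
    exact hcur (this ▸ hi_even)

theorem even_apply_iff (hσ : IsPaired σ) (j : Fin n) : Even (σ j : ℕ) ↔ Even (j : ℕ) := by
  obtain ⟨j, hj⟩ := j
  induction j with
  | zero =>
    refine iff_of_true (by_contra fun h => ?_) Even.zero
    obtain ⟨i, hi, -⟩ := hσ.exists_even_pred h
    simp at hi
  | succ j ih =>
    rw [hσ.even_apply_succ_iff hj, ih (by omega), Nat.even_add_one]

theorem even_card (hσ : IsPaired σ) : Even n := by
  by_contra hn
  obtain ⟨k, rfl⟩ := Nat.not_even_iff_odd.mp hn
  obtain ⟨hlt, -⟩ := hσ ⟨2 * k, by omega⟩ ((hσ.even_apply_iff _).2 (even_two_mul k))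
  simp at hlt

theorem sign_eq_one (hσ : IsPaired σ) : Perm.sign σ = 1 := by
  obtain ⟨m, hm⟩ := hσ.even_card
  let e : Fin m × Fin 2 ≃ Fin n := finProdFinEquiv.trans (finCongr (by omega))
  have he : ∀ k r, (e (k, r) : ℕ) = r + 2 * k := fun k r => by simp [e, finProdFinEquiv]
  have hlt (k : Fin m) : 2 * (k : ℕ) < n := by omega
  have h_even (k : Fin m) : Even (σ ⟨2 * k, hlt k⟩ : ℕ) := (hσ.even_apply_iff _).2 (even_two_mul _)
  let f : Fin m → Fin m := fun k => ⟨(σ ⟨2 * k, hlt k⟩ : ℕ) / 2, by omega⟩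
  refine Perm.sign_eq_one_of_permutes_blocks (e := e) (f := f) (by simp) fun k r => Fin.ext ?_
  have hf : 2 * (f k : ℕ) = σ ⟨2 * k, hlt k⟩ := Nat.mul_div_cancel' (h_even k).two_dvd
  rw [he, hf]
  fin_cases r
  · have : e (k, 0) = ⟨2 * k, hlt k⟩ := Fin.ext (by simp [he])
    simp [this]
  · obtain ⟨hlt', hsucc⟩ := hσ _ (h_even k)
    have : e (k, 1) = ⟨2 * k + 1, hlt'⟩ := Fin.ext (by simp [he]; omega)
    simp only [Fin.mk_one, Fin.isValue, this, hsucc]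
    omega

end IsPaired

theorem stmt_10_general (n : ℕ) (σ : Equiv.Perm (Fin n))
    (hpaired : ∀ j : Fin n, Odd ((σ j : ℕ) + 1) →
      ∃ hj : (j : ℕ) + 1 < n, ((σ ⟨(j : ℕ) + 1, hj⟩ : Fin n) : ℕ) + 1 = ((σ j : ℕ) + 1) + 1) :
    (∀ j : Fin n, Odd ((σ j : ℕ) + 1) → Odd ((j : ℕ) + 1)) ∧ Equiv.Perm.sign σ = 1 := by
  have hσ : IsPaired σ := fun j hj => by
    obtain ⟨hlt, hsucc⟩ := hpaired j (Even.add_one hj)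
    exact ⟨hlt, by omega⟩
  refine ⟨fun j hj => ?_, hσ.sign_eq_one⟩
  rw [Nat.odd_add_one, Nat.not_odd_iff_even] at hj ⊢
  exact (hσ.even_apply_iff j).1 hj

/-- A permutation `σ` of `{1,…,n}` (realized as `Equiv.Perm (Fin n)`, where `j : Fin n`
represents the integer `j+1 ∈ {1,…,n}`) is *paired* if whenever the value `σ(j)` is odd,
the index `j+1` is still in `{1,…,n}` and `σ(j+1) = σ(j)+1`.  Then every `j` with `σ(j)` odd
is itself odd, and `sgn σ = 1`. -/
theorem stmt_10 (n : ℕ) (hn : 0 < n) (σ : Equiv.Perm (Fin n))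
    (hpaired : ∀ j : Fin n, Odd ((σ j : ℕ) + 1) →
      ∃ hj : (j : ℕ) + 1 < n, ((σ ⟨(j : ℕ) + 1, hj⟩ : Fin n) : ℕ) + 1 = ((σ j : ℕ) + 1) + 1) :
    (∀ j : Fin n, Odd ((σ j : ℕ) + 1) → Odd ((j : ℕ) + 1)) ∧ Equiv.Perm.sign σ = 1 :=
  stmt_10_general n σ hpaired
end
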